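/- arXiv:2009.09743 — 8 statements merged into one kernel-verified Lean document; each statement's English description precedes it below -/
import Mathlib

section
/- Let S be the edge set of a spanning tree of G, let ℒ_S be its set of lonely cuts, L_S its set of lonely edges, and F_S := S \ L_S. Let J be any edge multiset of G with |C ∩ J| ≥ 1 for every C ∈ ℒ_S. Then there exists an edge set R ⊆ E such that (V, F_S ∪ J ∪ R) is connected and c(J) + 2·c(R) ≤ c^S(J), where c^S is extended additively over the multiset J. -/
open Finset
open scoped Classical symmDiff

/-- A multigraph on vertex type `V` with edge type `E`, given by the two endpoints
of each edge. -/
structure MultiGraph (V E : Type*) where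
  fst : E → V
  snd : E → V

namespace MultiGraph

variable {V E : Type*} [Fintype V] [DecidableEq V] [Fintype E] [DecidableEq E]
variable (G : MultiGraph V E)

/-- The cut `δ(U)`: the set of edges with exactly one endpoint in `U`. -/
noncomputable def cut (U : Finset V) : Finset E :=
  univ.filter fun e => (G.fst e ∈ U ∧ G.snd e ∉ U) ∨ (G.fst e ∉ U ∧ G.snd e ∈ U)

/-- The degree of `v` with respect to the edge multiset `F`. -/
def deg (F : Multiset E) (v : V) : ℕ :=
  (F.map fun e => (if G.fst e = v then 1 else 0) + (if G.snd e = v then 1 else 0)).sum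

/-- `odd(F)`: the set of vertices of odd degree in `(V, F)`. -/
noncomputable def oddVerts (F : Multiset E) : Finset V :=
  univ.filter fun v => Odd (G.deg F v)

/-- Adjacency via an edge satisfying the predicate `P`. -/
def Adj (P : E → Prop) (a b : V) : Prop :=
  ∃ e, P e ∧ ((G.fst e = a ∧ G.snd e = b) ∨ (G.fst e = b ∧ G.snd e = a))

/-- `(V, {e | P e})` is a connected (spanning) subgraph. -/
def ConnectedOn (P : E → Prop) : Prop :=
  ∀ u w : V, Relation.ReflTransGen (G.Adj P) u w

/-- The graph `G` is connected. -/
def Connected : Prop := G.ConnectedOn fun _ => True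

/-- A `T`-tour: a multi-subset `F` of the edges such that `(V, F)` is connected and
`odd(F) = T`. -/
def IsTTour (T : Finset V) (F : Multiset E) : Prop :=
  G.ConnectedOn (· ∈ F) ∧ G.oddVerts F = T

/-- `S` is the edge set of a spanning tree of `G`. -/
def IsSpanningTree (S : Finset E) : Prop :=
  G.ConnectedOn (· ∈ S) ∧ S.card + 1 = Fintype.card V

/-- `δ(𝒲)`: the set of edges whose endpoints lie in different parts of the
partition `𝒲` of `V`. -/
noncomputable def partitionCut (W : Finpartition (univ : Finset V)) : Finset E :=
  univ.filter fun e => ∀ P ∈ W.parts, ¬(G.fst e ∈ P ∧ G.snd e ∈ P)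

/-- Feasibility for the standard LP relaxation of the `T`-tour problem. -/
def LPFeasible (T : Finset V) (x : E → ℝ) : Prop :=
  (∀ e, 0 ≤ x e) ∧
  (∀ U : Finset V, U.Nonempty → U ≠ univ → Even ((T ∩ U).card) →
    2 ≤ ∑ e ∈ G.cut U, x e) ∧
  (∀ W : Finpartition (univ : Finset V),
    (W.parts.card : ℝ) - 1 ≤ ∑ e ∈ G.partitionCut W, x e)

/-- `C` is a cut of `G`, i.e. `C = δ(U)` for some nonempty proper `U ⊆ V`. -/
def IsCut (C : Finset E) : Prop :=
  ∃ U : Finset V, U.Nonempty ∧ U ≠ univ ∧ C = G.cut U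

/-- A narrow cut: a cut `C` with `x(C) < 2`. -/
def Narrow (x : E → ℝ) (C : Finset E) : Prop :=
  G.IsCut C ∧ ∑ e ∈ C, x e < 2

/-- `𝒩`: the set of narrow cuts. -/
noncomputable def narrowCuts (x : E → ℝ) : Finset (Finset E) :=
  univ.filter fun C => G.Narrow x C

/-- A narrow cut `C` is lonely for `S` if `|S ∩ C| = 1`. -/
def Lonely (x : E → ℝ) (S C : Finset E) : Prop :=
  G.Narrow x C ∧ (S ∩ C).card = 1

/-- `ℒ_S`: the set of lonely cuts of `S`. -/
noncomputable def lonelyCuts (x : E → ℝ) (S : Finset E) : Finset (Finset E) :=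
  univ.filter fun C => G.Lonely x S C

/-- `L_S = ∪_{C ∈ ℒ_S} (S ∩ C)`: the set of lonely edges of `S`. -/
noncomputable def lonelyEdges (x : E → ℝ) (S : Finset E) : Finset E :=
  S.filter fun e => ∃ C, G.Lonely x S C ∧ e ∈ C

/-- The incidence vector `χ^F` of an edge set `F`. -/
def chi (F : Finset E) : E → ℝ := fun e => if e ∈ F then 1 else 0

/-- The vector `v^C = (1/(2 - x(C))) · Σ_{S : C ∈ ℒ_S} p_S · χ^{S ∩ C}`. -/
noncomputable def vC (x : E → ℝ) (p : Finset E → ℝ) (C : Finset E) : E → ℝ :=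
  fun e => (1 / (2 - ∑ f ∈ C, x f)) *
    ∑ S : Finset E, (if G.Lonely x S C then p S else 0) * chi (S ∩ C) e

/-- The modified cost
`c^S(e) = c(e) + 2·(Σ_{C ∈ ℒ_S : e ∈ C} c(S ∩ C) − max_{C ∈ ℒ_S : e ∈ C} c(S ∩ C))`,
where the maximum over the empty set is `0`. -/
noncomputable def modCost (c x : E → ℝ) (S : Finset E) (e : E) : ℝ :=
  c e + 2 * ((∑ C ∈ (G.lonelyCuts x S).filter (fun C => e ∈ C), ∑ f ∈ S ∩ C, c f)
    - (if h : ((G.lonelyCuts x S).filter (fun C => e ∈ C)).Nonempty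
        then ((G.lonelyCuts x S).filter (fun C => e ∈ C)).sup' h (fun C => ∑ f ∈ S ∩ C, c f)
        else 0))

/-- The set of vertices reachable from `v` using edges satisfying `P`. -/
noncomputable def reachSet (P : E → Prop) (v : V) : Finset V :=
  univ.filter fun w => Relation.ReflTransGen (G.Adj P) v w

end MultiGraph

/-- Auxiliary: the sum of a nonnegative function over a `biUnion` is at most the
sum of the sums over the pieces. -/
private lemma sum_biUnion_le_sum_aux {ι α : Type*} [DecidableEq α] (s : Finset ι)
    (t : ι → Finset α) (f : α → ℝ) (hf : ∀ a, 0 ≤ f a) :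
    ∑ a ∈ s.biUnion t, f a ≤ ∑ i ∈ s, ∑ a ∈ t i, f a := by
  classical
  induction s using Finset.induction with
  | empty => simp
  | @insert i s hi ih =>
    rw [Finset.biUnion_insert, Finset.sum_insert hi]
    have h2 := Finset.sum_union_inter (s₁ := t i) (s₂ := s.biUnion t) (f := f)
    have h3 : 0 ≤ ∑ a ∈ (t i ∩ s.biUnion t), f a := Finset.sum_nonneg fun a _ => hf a
    linarith

namespace MultiGraph

variable {V E : Type*} [Fintype V] [DecidableEq V] [Fintype E] [DecidableEq E]

set_option maxHeartbeats 2000000 in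
/-- Let `S` be a spanning tree, `F_S := S \ L_S`, and let `J` be any
edge multiset with `|C ∩ J| ≥ 1` for every lonely cut `C ∈ ℒ_S`. Then there is an edge
set `R ⊆ E` such that `(V, F_S ∪ J ∪ R)` is connected and `c(J) + 2·c(R) ≤ c^S(J)`. -/
theorem reconnection_lemma (G : MultiGraph V E) (hG : G.Connected)
    (T : Finset V) (hT : Even T.card) (c : E → ℝ) (hc : ∀ e, 0 ≤ c e)
    (x : E → ℝ) (hx : G.LPFeasible T x)
    (S : Finset E) (hS : G.IsSpanningTree S) (J : Multiset E)
    (hJ : ∀ C ∈ G.lonelyCuts x S, ∃ e ∈ J, e ∈ C) :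
    ∃ R : Finset E,
      G.ConnectedOn (fun e => e ∈ S \ G.lonelyEdges x S ∨ e ∈ J ∨ e ∈ R) ∧
      (J.map c).sum + 2 * ∑ e ∈ R, c e ≤ (J.map (G.modCost c x S)).sum := by
  classical
  set w : Finset E → ℝ := fun C => ∑ f ∈ S ∩ C, c f with hw
  have hw0 : ∀ C, 0 ≤ w C := fun C => Finset.sum_nonneg fun f _ => hc f
  set CJ : E → Finset (Finset E) := fun j => (G.lonelyCuts x S).filter (fun C => j ∈ C)
    with hCJdef
  obtain ⟨Cm, hCm⟩ : ∃ Cm : E → Finset E, ∀ j, (CJ j).Nonempty →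
      Cm j ∈ CJ j ∧ ∀ D ∈ CJ j, w D ≤ w (Cm j) := by
    refine ⟨fun j => if h : (CJ j).Nonempty then
      (Finset.exists_max_image (CJ j) w h).choose else ∅, fun j h => ?_⟩
    simp only [dif_pos h]
    obtain ⟨h1, h2⟩ := (Finset.exists_max_image (CJ j) w h).choose_spec
    exact ⟨h1, h2⟩
  set Rf : E → Finset E := fun j => ((CJ j).erase (Cm j)).biUnion (fun C => S ∩ C) with hRfdef
  set R : Finset E := J.toFinset.biUnion Rf with hRdef
  refine ⟨R, ?_, ?_⟩
  · -- Connectivity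
    intro u v
    by_cases hvU : Relation.ReflTransGen
        (G.Adj fun e => e ∈ S \ G.lonelyEdges x S ∨ e ∈ J ∨ e ∈ R) u v
    · exact hvU
    exfalso
    set P : E → Prop := fun e => e ∈ S \ G.lonelyEdges x S ∨ e ∈ J ∨ e ∈ R with hP
    set U : Finset V := univ.filter (fun z => Relation.ReflTransGen (G.Adj P) u z) with hU
    have hmemU : ∀ z, z ∈ U ↔ Relation.ReflTransGen (G.Adj P) u z := by
      intro z; simp [hU]
    have huU : u ∈ U := (hmemU u).2 .refl
    have hclosed : ∀ g, P g → g ∉ G.cut U := by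
      intro g hg hcut
      simp only [cut, mem_filter, mem_univ, true_and] at hcut
      rcases hcut with ⟨h1, h2⟩ | ⟨h1, h2⟩
      · exact h2 ((hmemU _).2 (((hmemU _).1 h1).tail ⟨g, hg, Or.inl ⟨rfl, rfl⟩⟩))
      · exact h1 ((hmemU _).2 (((hmemU _).1 h2).tail ⟨g, hg, Or.inr ⟨rfl, rfl⟩⟩))
    have lemA : ∀ (Q : E → Prop), (∀ g, Q g → g ∉ G.cut U) →
        ∀ a b : V, Relation.ReflTransGen (G.Adj Q) a b → a ∈ U → b ∈ U := by
      intro Q hQ a b hab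
      induction hab with
      | refl => exact id
      | tail _ hstep ih =>
        intro ha
        have hm := ih ha
        obtain ⟨g, hg, hor⟩ := hstep
        have hside : (G.fst g ∈ U) ↔ (G.snd g ∈ U) := by
          by_contra hcon
          apply hQ g hg
          simp only [cut, mem_filter, mem_univ, true_and]
          by_cases h1 : G.fst g ∈ U <;> by_cases h2 : G.snd g ∈ U <;> tauto
        rcases hor with ⟨h1, h2⟩ | ⟨h1, h2⟩
        · rw [← h2]; rw [← h1] at hm; exact hside.mp hm
        · rw [← h1]; rw [← h2] at hm; exact hside.mpr hm
    have hSedge : ∃ e, e ∈ S ∧ e ∈ G.cut U := by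
      by_contra h
      push_neg at h
      exact hvU ((hmemU v).1 (lemA (· ∈ S) (fun g hg => h g hg) u v (hS.1 u v) huU))
    obtain ⟨e, heS, heC⟩ := hSedge
    have hPnot : ∀ f, f ∈ S → f ∈ G.cut U → f ∈ G.lonelyEdges x S := by
      intro f hfS hfC
      by_contra hfl
      exact hclosed f (Or.inl (Finset.mem_sdiff.mpr ⟨hfS, hfl⟩)) hfC
    obtain ⟨Cof, hCof⟩ : ∃ Cof : E → Finset E, ∀ f, f ∈ G.lonelyEdges x S →
        G.Lonely x S (Cof f) ∧ f ∈ Cof f := by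
      refine ⟨fun f => if h : ∃ C, G.Lonely x S C ∧ f ∈ C then h.choose else ∅, fun f hf => ?_⟩
      have h : ∃ C, G.Lonely x S C ∧ f ∈ C := (Finset.mem_filter.mp hf).2
      simp only [dif_pos h]
      exact h.choose_spec
    obtain ⟨Uof, hUof⟩ : ∃ Uof : E → Finset V, ∀ f, G.IsCut (Cof f) →
        Cof f = G.cut (Uof f) := by
      refine ⟨fun f => if h : ∃ U', U'.Nonempty ∧ U' ≠ Finset.univ ∧ Cof f = G.cut U'
        then h.choose else ∅, fun f h => ?_⟩
      have h' : ∃ U', U'.Nonempty ∧ U' ≠ Finset.univ ∧ Cof f = G.cut U' := h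
      simp only [dif_pos h']
      exact h'.choose_spec.2.2
    have hfacts : ∀ f ∈ S ∩ G.cut U, G.Lonely x S (Cof f) ∧ f ∈ Cof f ∧
        Cof f = G.cut (Uof f) ∧ S ∩ Cof f = {f} := by
      intro f hf
      obtain ⟨hfS, hfC⟩ := Finset.mem_inter.mp hf
      have hfl := hPnot f hfS hfC
      obtain ⟨hL, hmem⟩ := hCof f hfl
      have hcut := hUof f hL.1.1
      have hsingle : S ∩ Cof f = {f} := by
        obtain ⟨a, ha⟩ := Finset.card_eq_one.mp hL.2
        have hfin : f ∈ S ∩ Cof f := Finset.mem_inter.mpr ⟨hfS, hmem⟩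
        have hfa : f = a := Finset.mem_singleton.mp (ha ▸ hfin)
        rw [ha, hfa]
      exact ⟨hL, hmem, hcut, hsingle⟩
    have heIn : e ∈ S ∩ G.cut U := Finset.mem_inter.mpr ⟨heS, heC⟩
    have hCofe_mem : Cof e ∈ G.lonelyCuts x S :=
      Finset.mem_filter.mpr ⟨Finset.mem_univ _, (hfacts e heIn).1⟩
    obtain ⟨j, hjJ, hjC⟩ := hJ (Cof e) hCofe_mem
    have hjP : P j := Or.inr (Or.inl hjJ)
    have hjncut : j ∉ G.cut U := hclosed j hjP
    have hCmj : ∀ f ∈ S ∩ G.cut U, j ∈ Cof f → Cof f = Cm j := by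
      intro f hf hjf
      obtain ⟨hL, hmem, hcut, hsingle⟩ := hfacts f hf
      have hmemCJ : Cof f ∈ CJ j := by
        rw [hCJdef]
        exact Finset.mem_filter.mpr ⟨Finset.mem_filter.mpr ⟨Finset.mem_univ _, hL⟩, hjf⟩
      by_contra hne
      have hfRf : f ∈ Rf j := Finset.mem_biUnion.mpr
        ⟨Cof f, Finset.mem_erase.mpr ⟨hne, hmemCJ⟩, Finset.mem_inter.mpr
          ⟨(Finset.mem_inter.mp hf).1, hmem⟩⟩
      have hfR : f ∈ R := Finset.mem_biUnion.mpr ⟨j, Multiset.mem_toFinset.mpr hjJ, hfRf⟩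
      exact hclosed f (Or.inr (Or.inr hfR)) (Finset.mem_inter.mp hf).2
    have hCe : Cof e = Cm j := hCmj e heIn hjC
    have huniq : ∀ f ∈ S ∩ G.cut U, (j ∈ Cof f ↔ f = e) := by
      intro f hf
      constructor
      · intro hjf
        have h1 : Cof f = Cm j := hCmj f hf hjf
        have h2 : S ∩ Cof f = S ∩ Cof e := by rw [h1, hCe]
        rw [(hfacts f hf).2.2.2, (hfacts e heIn).2.2.2] at h2
        exact Finset.singleton_inj.mp h2
      · intro h; rw [h]; exact hjC
    set χ : Finset V → V → ZMod 2 := fun W z => if z ∈ W then 1 else 0 with hχ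
    set φ : V → ZMod 2 := fun z => χ U z + ∑ f ∈ S ∩ G.cut U, χ (Uof f) z with hφ
    have hcross : ∀ (W : Finset V) (g : E),
        χ W (G.fst g) + χ W (G.snd g) = if g ∈ G.cut W then 1 else 0 := by
      intro W g
      simp only [hχ, cut, Finset.mem_filter, Finset.mem_univ, true_and]
      by_cases h1 : G.fst g ∈ W <;> by_cases h2 : G.snd g ∈ W <;> simp [h1, h2] <;> decide
    have hz2 : ∀ a b : ZMod 2, a + b = 0 → a = b := by decide
    have hz1 : ∀ a : ZMod 2, a + a ≠ 1 := by decide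
    have hedge : ∀ g ∈ S, φ (G.fst g) = φ (G.snd g) := by
      intro g hg
      apply hz2
      have hsum : φ (G.fst g) + φ (G.snd g) =
          (χ U (G.fst g) + χ U (G.snd g)) +
            ∑ f ∈ S ∩ G.cut U, (χ (Uof f) (G.fst g) + χ (Uof f) (G.snd g)) := by
        simp only [hφ]; rw [Finset.sum_add_distrib]; ring
      rw [hsum, hcross]
      have hterm : ∑ f ∈ S ∩ G.cut U, (χ (Uof f) (G.fst g) + χ (Uof f) (G.snd g)) =
          ∑ f ∈ S ∩ G.cut U, (if f = g then (1 : ZMod 2) else 0) := by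
        apply Finset.sum_congr rfl
        intro f hf
        rw [hcross]
        obtain ⟨hL, hmem, hcut, hsingle⟩ := hfacts f hf
        have hiff : g ∈ G.cut (Uof f) ↔ f = g := by
          constructor
          · intro hgf
            have hgin : g ∈ S ∩ Cof f := Finset.mem_inter.mpr ⟨hg, hcut ▸ hgf⟩
            rw [hsingle] at hgin
            exact (Finset.mem_singleton.mp hgin).symm
          · intro h; rw [← h]; exact hcut ▸ hmem
        simp only [hiff]
      rw [hterm, Finset.sum_ite_eq' (S ∩ G.cut U) g (fun _ => (1 : ZMod 2))]
      by_cases hgc : g ∈ G.cut U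
      · rw [if_pos hgc, if_pos (Finset.mem_inter.mpr ⟨hg, hgc⟩)]; decide
      · rw [if_neg hgc, if_neg (fun hh => hgc (Finset.mem_inter.mp hh).2)]; decide
    have hconst : ∀ a b : V, Relation.ReflTransGen (G.Adj (· ∈ S)) a b → φ a = φ b := by
      intro a b hab
      induction hab with
      | refl => rfl
      | tail _ hstep ih =>
        obtain ⟨g, hg, hor⟩ := hstep
        rcases hor with ⟨h1, h2⟩ | ⟨h1, h2⟩
        · rw [ih, ← h1, ← h2]; exact hedge g hg
        · rw [ih, ← h1, ← h2]; exact (hedge g hg).symm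
    have hpq : φ (G.fst j) = φ (G.snd j) := hconst _ _ (hS.1 _ _)
    have hsumj : φ (G.fst j) + φ (G.snd j) = 1 := by
      have hsum : φ (G.fst j) + φ (G.snd j) =
          (χ U (G.fst j) + χ U (G.snd j)) +
            ∑ f ∈ S ∩ G.cut U, (χ (Uof f) (G.fst j) + χ (Uof f) (G.snd j)) := by
        simp only [hφ]; rw [Finset.sum_add_distrib]; ring
      rw [hsum, hcross]
      have hterm : ∑ f ∈ S ∩ G.cut U, (χ (Uof f) (G.fst j) + χ (Uof f) (G.snd j)) =
          ∑ f ∈ S ∩ G.cut U, (if f = e then (1 : ZMod 2) else 0) := by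
        apply Finset.sum_congr rfl
        intro f hf
        rw [hcross]
        obtain ⟨hL, hmem, hcut, hsingle⟩ := hfacts f hf
        have hiff : j ∈ G.cut (Uof f) ↔ f = e := by
          rw [← hcut]
          exact huniq f hf
        simp only [hiff]
      rw [hterm, Finset.sum_ite_eq' (S ∩ G.cut U) e (fun _ => (1 : ZMod 2))]
      rw [if_neg hjncut, if_pos heIn]
      decide
    rw [hpq] at hsumj
    exact hz1 _ hsumj
  · -- Cost bound
    set g : E → ℝ := fun j => (∑ C ∈ CJ j, w C) -
        (if h : (CJ j).Nonempty then (CJ j).sup' h w else 0) with hgdef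
    have hmod : ∀ jj : E, G.modCost c x S jj = c jj + 2 * g jj := by
      intro jj
      simp only [modCost, hgdef, hCJdef, hw]
    have hg0 : ∀ jj, 0 ≤ g jj := by
      intro jj
      simp only [hgdef]
      by_cases h : (CJ jj).Nonempty
      · rw [dif_pos h]
        have hle : (CJ jj).sup' h w ≤ ∑ C ∈ CJ jj, w C :=
          Finset.sup'_le h w fun C hC => Finset.single_le_sum (fun D _ => hw0 D) hC
        linarith
      · rw [dif_neg h]
        simp [Finset.not_nonempty_iff_eq_empty.mp h]
    have hRle : ∑ e ∈ R, c e ≤ ∑ j ∈ J.toFinset, ∑ e ∈ Rf j, c e := by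
      rw [hRdef]
      exact sum_biUnion_le_sum_aux _ _ _ hc
    have hRfle : ∀ jj, ∑ e ∈ Rf jj, c e ≤ g jj := by
      intro jj
      by_cases h : (CJ jj).Nonempty
      · have h1 : ∑ e ∈ Rf jj, c e ≤ ∑ C ∈ (CJ jj).erase (Cm jj), w C := by
          rw [hRfdef]
          simpa [hw] using
            sum_biUnion_le_sum_aux ((CJ jj).erase (Cm jj)) (fun C => S ∩ C) c hc
        have h2 : ∑ C ∈ (CJ jj).erase (Cm jj), w C = (∑ C ∈ CJ jj, w C) - w (Cm jj) :=
          Finset.sum_erase_eq_sub ((hCm jj h).1)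
        have h3 : (CJ jj).sup' h w ≤ w (Cm jj) := Finset.sup'_le h w (hCm jj h).2
        simp only [hgdef, dif_pos h]
        linarith
      · have hempty : CJ jj = ∅ := Finset.not_nonempty_iff_eq_empty.mp h
        simp only [hgdef, dif_neg h, hRfdef, hempty]
        simp
    have hfin : ∑ j ∈ J.toFinset, g j ≤ (J.map g).sum := by
      rw [Finset.sum_multiset_map_count]
      apply Finset.sum_le_sum
      intro a ha
      have h1 : 0 < J.count a := Multiset.count_pos.mpr (Multiset.mem_toFinset.mp ha)
      rw [nsmul_eq_mul]
      calc g a = 1 * g a := (one_mul _).symm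
        _ ≤ (J.count a : ℝ) * g a := by
            apply mul_le_mul_of_nonneg_right _ (hg0 a)
            exact_mod_cast h1
    have hmap : (J.map (G.modCost c x S)).sum = (J.map c).sum + 2 * (J.map g).sum := by
      have hcongr : (J.map (G.modCost c x S)) = J.map (fun jj => c jj + 2 * g jj) :=
        Multiset.map_congr rfl (fun jj _ => hmod jj)
      rw [hcongr, Multiset.sum_map_add]
      congr 1
      rw [← Multiset.sum_map_mul_left]
    have hmain : ∑ e ∈ R, c e ≤ (J.map g).sum :=
      le_trans hRle (le_trans (Finset.sum_le_sum fun jj _ => hRfle jj) hfin)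
    rw [hmap]
    linarith

end MultiGraph
end

section
/- There exists a spanning tree edge set S with p_S > 0 such that c(S) + c(J_S) ≤ c(x*) + c(J_p). Consequently, since S ∪̇ J_S is a T-tour for every spanning tree S, there exists a T-tour of G of cost at most c(x*) + c(J_p). -/
/-!
Since `c ≥ 0` and `x* ≥ Σ_S p_S χ^S`, the `p`-weighted average of `c(S) + c(J_S)` is at most
`c(x*) + c(J_p)`; as `p` is a probability vector, some `S` in its support is at most the average.
The multiset `S ∪̇ J_S` contains the connected `S`, and its degrees are those of `I_S` plus twice
those of `J_S`, so its odd vertices are `odd(I_S) = T`.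
-/

open Finset
open scoped Classical symmDiff

namespace MultiGraph

section

variable {V E : Type*}

lemma sum_mul_chi [Fintype E] [DecidableEq E] (c : E → ℝ) (A : Finset E) :
    ∑ e, c e * chi A e = ∑ e ∈ A, c e := by
  simp [chi, mul_ite, Finset.sum_ite_mem]

lemma sum_mul_sum_eq_sum_mul_sum_chi [Fintype E] [DecidableEq E] {ι : Type*} [Fintype ι]
    (c : E → ℝ) (p : ι → ℝ) (q : ι → Finset E) :
    ∑ i, p i * ∑ e ∈ q i, c e = ∑ e, c e * ∑ i, p i * chi (q i) e := by
  simp_rw [← sum_mul_chi c, Finset.mul_sum]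
  rw [Finset.sum_comm]
  exact Finset.sum_congr rfl fun _ _ => Finset.sum_congr rfl fun _ _ => by ring

lemma exists_pos_weight_le_of_sum_mul_le {ι : Type*} [Fintype ι] {p f : ι → ℝ} {A : ℝ}
    (hp : ∀ i, 0 ≤ p i) (hpsum : ∑ i, p i = 1) (hf : ∑ i, p i * f i ≤ A) :
    ∃ i, 0 < p i ∧ f i ≤ A := by
  by_contra! hlt
  obtain ⟨i₀, hi₀⟩ : ∃ i, 0 < p i := by
    by_contra! hnonpos
    simp [fun i => le_antisymm (hnonpos i) (hp i)] at hpsum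
  have : ∑ i, p i * A < ∑ i, p i * f i :=
    Finset.sum_lt_sum
      (fun i _ => (hp i).eq_or_lt.elim (fun h => by simp [← h])
        fun h => mul_le_mul_of_nonneg_left (hlt i h).le h.le)
      ⟨i₀, Finset.mem_univ _, mul_lt_mul_of_pos_left (hlt i₀ hi₀) hi₀⟩
  rw [← Finset.sum_mul, hpsum, one_mul] at this
  linarith

lemma ConnectedOn.mono {G : MultiGraph V E} {P Q : E → Prop} (hPQ : ∀ e, P e → Q e)
    (hP : G.ConnectedOn P) : G.ConnectedOn Q := fun u w =>
  Relation.ReflTransGen.mono (fun _ _ ⟨e, he, hends⟩ => ⟨e, hPQ e he, hends⟩) _ _ (hP u w)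

lemma deg_add [DecidableEq V] (G : MultiGraph V E) (F₁ F₂ : Multiset E) (v : V) :
    G.deg (F₁ + F₂) v = G.deg F₁ v + G.deg F₂ v := by
  simp [deg]

lemma oddVerts_add_sdiff [Fintype V] [DecidableEq V] [DecidableEq E] (G : MultiGraph V E)
    {J S : Finset E} (hJS : J ⊆ S) :
    G.oddVerts (S.val + (S \ J).val) = G.oddVerts J.val := by
  have hsplit : S.val = J.val + (S \ J).val := by
    rw [Finset.sdiff_val, add_tsub_cancel_of_le (Finset.val_le_iff.mpr hJS)]
  ext v
  simp only [oddVerts, Finset.mem_filter, Finset.mem_univ, true_and]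
  rw [hsplit, deg_add, deg_add, add_assoc, ← two_mul, Nat.odd_add]
  simp

lemma isTTour_add_sdiff [Fintype V] [DecidableEq V] [DecidableEq E] (G : MultiGraph V E)
    {T : Finset V} {J S : Finset E} (hS : G.ConnectedOn (· ∈ S)) (hJS : J ⊆ S)
    (hJ : G.oddVerts J.val = T) :
    G.IsTTour T (S.val + (S \ J).val) :=
  ⟨hS.mono fun _ he => Multiset.mem_add.mpr (Or.inl he), (G.oddVerts_add_sdiff hJS).trans hJ⟩

end

variable {V E : Type*} [Fintype V] [DecidableEq V] [Fintype E] [DecidableEq E]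

theorem best_of_many_simple_bound_general (G : MultiGraph V E)
    (T : Finset V) (c : E → ℝ) (hc : ∀ e, 0 ≤ c e)
    (x : E → ℝ)
    (p : Finset E → ℝ) (hp0 : ∀ S, 0 ≤ p S)
    (hptree : ∀ S, p S ≠ 0 → G.IsSpanningTree S)
    (hpsum : ∑ S : Finset E, p S = 1)
    (hdom : ∀ e, ∑ S : Finset E, p S * chi S e ≤ x e)
    (I : Finset E → Finset E)
    (hI : ∀ S, p S ≠ 0 → I S ⊆ S ∧ G.oddVerts (I S).val = T) :
    (∃ S : Finset E, 0 < p S ∧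
      (∑ e ∈ S, c e) + (∑ e ∈ S \ I S, c e) ≤
        (∑ e, c e * x e) + ∑ e, c e * ∑ S : Finset E, p S * chi (S \ I S) e) ∧
    (∃ F : Multiset E, G.IsTTour T F ∧
      (F.map c).sum ≤
        (∑ e, c e * x e) + ∑ e, c e * ∑ S : Finset E, p S * chi (S \ I S) e) := by
  have havg : ∑ S : Finset E, p S * ((∑ e ∈ S, c e) + ∑ e ∈ S \ I S, c e) ≤
      (∑ e, c e * x e) + ∑ e, c e * ∑ S : Finset E, p S * chi (S \ I S) e := by
    simp only [mul_add, Finset.sum_add_distrib, sum_mul_sum_eq_sum_mul_sum_chi c p]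
    gcongr with e
    exacts [hc e, hdom e]
  obtain ⟨S, hpS, hle⟩ := exists_pos_weight_le_of_sum_mul_le hp0 hpsum havg
  obtain ⟨hIS, hodd⟩ := hI S hpS.ne'
  refine ⟨⟨S, hpS, hle⟩, S.val + (S \ I S).val,
    G.isTTour_add_sdiff (hptree S hpS.ne').1 hIS hodd, ?_⟩
  rwa [Multiset.map_add, Multiset.sum_add]

/-- There is a spanning tree `S` with `p_S > 0` such that
`c(S) + c(J_S) ≤ c(x*) + c(J_p)`; consequently there is a `T`-tour of cost at most
`c(x*) + c(J_p)`, where `J_S := S \ I_S` and `J_p := Σ_S p_S·χ^{J_S}`. -/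
theorem best_of_many_simple_bound (G : MultiGraph V E) (hG : G.Connected)
    (T : Finset V) (hT : Even T.card) (c : E → ℝ) (hc : ∀ e, 0 ≤ c e)
    (x : E → ℝ) (hx : G.LPFeasible T x)
    (p : Finset E → ℝ) (hp0 : ∀ S, 0 ≤ p S)
    (hptree : ∀ S, p S ≠ 0 → G.IsSpanningTree S)
    (hpsum : ∑ S : Finset E, p S = 1)
    (hdom : ∀ e, ∑ S : Finset E, p S * chi S e ≤ x e)
    (I : Finset E → Finset E)
    (hI : ∀ S, p S ≠ 0 → I S ⊆ S ∧ G.oddVerts (I S).val = T) :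
    (∃ S : Finset E, 0 < p S ∧
      (∑ e ∈ S, c e) + (∑ e ∈ S \ I S, c e) ≤
        (∑ e, c e * x e) + ∑ e, c e * ∑ S : Finset E, p S * chi (S \ I S) e) ∧
    (∃ F : Multiset E, G.IsTTour T F ∧
      (F.map c).sum ≤
        (∑ e, c e * x e) + ∑ e, c e * ∑ S : Finset E, p S * chi (S \ I S) e) :=
  best_of_many_simple_bound_general G T c hc x p hp0 hptree hpsum hdom I hI

end MultiGraph
end

section
/- For every narrow cut C ∈ 𝒩 the vector v^C := (1/(2 − x*(C)))·Σ_{S∈𝒮: C∈ℒ_S} p_S·χ^{S∩C} satisfies v^C(C) ≥ 1. -/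
open Finset
open scoped Classical symmDiff

namespace MultiGraph

variable {V E : Type*} [Fintype V] [DecidableEq V] [Fintype E] [DecidableEq E]

/-- A connected spanning subgraph crosses every cut. -/
lemma cross_cut (G : MultiGraph V E) (S : Finset E) (hS : G.ConnectedOn (· ∈ S))
    (U : Finset V) (hne : U.Nonempty) (hU : U ≠ univ) :
    (S ∩ G.cut U).Nonempty := by
  classical
  obtain ⟨u, hu⟩ := hne
  obtain ⟨v, hv⟩ : ∃ v, v ∉ U := by
    by_contra h
    push_neg at h
    exact hU (eq_univ_iff_forall.mpr h)
  have key : ∀ a b : V, Relation.ReflTransGen (G.Adj (· ∈ S)) a b →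
      a ∈ U → b ∉ U → (S ∩ G.cut U).Nonempty := by
    intro a b hab
    induction hab with
    | refl => intro h h'; exact absurd h h'
    | @tail c d h hadj ih =>
      intro ha hd
      by_cases hcU : c ∈ U
      · obtain ⟨e, heS, he⟩ := hadj
        refine ⟨e, ?_⟩
        simp only [mem_inter, cut, mem_filter, mem_univ, true_and]
        refine ⟨heS, ?_⟩
        rcases he with ⟨h1, h2⟩ | ⟨h1, h2⟩
        · exact Or.inl ⟨h1 ▸ hcU, h2 ▸ hd⟩
        · exact Or.inr ⟨h1 ▸ hd, h2 ▸ hcU⟩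
      · exact ih ha hcU
  exact key u v (hS u v) hu hv

private lemma sum_chi_inter (S C : Finset E) :
    ∑ e ∈ C, chi S e = ((S ∩ C).card : ℝ) := by
  classical
  simp only [chi]
  rw [Finset.sum_ite, Finset.sum_const_zero, add_zero, Finset.sum_const,
    Finset.filter_mem_eq_inter, Finset.inter_comm]
  simp

/-- For every narrow cut `C ∈ 𝒩`, the vector
`v^C = (1/(2 − x*(C)))·Σ_{S : C ∈ ℒ_S} p_S·χ^{S ∩ C}` satisfies `v^C(C) ≥ 1`. -/
theorem vC_on_cut_ge_one (G : MultiGraph V E) (hG : G.Connected)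
    (T : Finset V) (hT : Even T.card) (x : E → ℝ) (hx : G.LPFeasible T x)
    (p : Finset E → ℝ) (hp0 : ∀ S, 0 ≤ p S)
    (hptree : ∀ S, p S ≠ 0 → G.IsSpanningTree S)
    (hpsum : ∑ S : Finset E, p S = 1)
    (hdom : ∀ e, ∑ S : Finset E, p S * chi S e ≤ x e)
    (C : Finset E) (hC : G.Narrow x C) :
    1 ≤ ∑ e ∈ C, G.vC x p C e := by
  classical
  have hxC : ∑ e ∈ C, x e < 2 := hC.2
  have hwpos : 0 < 2 - ∑ e ∈ C, x e := by linarith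
  -- every tree crosses the cut
  have hcross : ∀ S : Finset E, p S ≠ 0 → 1 ≤ (S ∩ C).card := by
    intro S hpS
    obtain ⟨U, hne, hU, hCU⟩ := hC.1
    obtain ⟨e, he⟩ := cross_cut G S (hptree S hpS).1 U hne hU
    rw [hCU]
    exact Finset.card_pos.mpr ⟨e, he⟩
  -- the mass of trees with exactly one edge in C
  set q : ℝ := ∑ S : Finset E, (if (S ∩ C).card = 1 then p S else 0) with hq
  have h1 : ∑ S : Finset E, p S * ((S ∩ C).card : ℝ) ≤ ∑ e ∈ C, x e := by
    calc ∑ S : Finset E, p S * ((S ∩ C).card : ℝ)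
        = ∑ S : Finset E, ∑ e ∈ C, p S * chi S e := by
          refine Finset.sum_congr rfl fun S _ => ?_
          rw [← Finset.mul_sum, sum_chi_inter]
      _ = ∑ e ∈ C, ∑ S : Finset E, p S * chi S e := Finset.sum_comm
      _ ≤ ∑ e ∈ C, x e := Finset.sum_le_sum fun e _ => hdom e
  have h2 : 2 - q ≤ ∑ S : Finset E, p S * ((S ∩ C).card : ℝ) := by
    have : 2 - q = ∑ S : Finset E,
        (2 * p S - (if (S ∩ C).card = 1 then p S else 0)) := by
      rw [Finset.sum_sub_distrib, ← Finset.mul_sum, hpsum, ← hq]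
      ring
    rw [this]
    refine Finset.sum_le_sum fun S _ => ?_
    by_cases hpS : p S = 0
    · simp [hpS]
    · have hc1 := hcross S hpS
      by_cases hc : (S ∩ C).card = 1
      · simp [hc]; linarith
      · have hc2 : 2 ≤ (S ∩ C).card := by omega
        have : (2 : ℝ) ≤ ((S ∩ C).card : ℝ) := by exact_mod_cast hc2
        have hp := hp0 S
        simp only [if_neg hc, sub_zero]
        nlinarith
  have hqx : 2 - ∑ e ∈ C, x e ≤ q := by linarith
  -- compute the left-hand side
  have hLHS : ∑ e ∈ C, G.vC x p C e = (1 / (2 - ∑ e ∈ C, x e)) * q := by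
    simp only [vC]
    rw [← Finset.mul_sum]
    congr 1
    rw [Finset.sum_comm]
    refine Finset.sum_congr rfl fun S _ => ?_
    rw [← Finset.mul_sum, sum_chi_inter]
    have hinter : (S ∩ C) ∩ C = S ∩ C := by
      rw [Finset.inter_assoc, Finset.inter_self]
    rw [hinter]
    by_cases hL : G.Lonely x S C
    · rw [if_pos hL, if_pos hL.2, hL.2]
      simp
    · rw [if_neg hL]
      by_cases hc : (S ∩ C).card = 1
      · exact absurd ⟨hC, hc⟩ hL
      · rw [if_neg hc, zero_mul]
  rw [hLHS, one_div_mul_eq_div, le_div_iff₀ hwpos, one_mul]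
  linarith

end MultiGraph
end

section
/- Let α ≥ 0 and let S be the edge set of a spanning tree of G. Define y^S := (1/2)·x* + α·χ^{I_S} + Σ_{C∈𝒩\ℒ_S} max{1 − (1/2)·x*(C) − α, 0}·v^C. Then y^S(C) ≥ 1 for every (odd(S) △ T)-cut C, i.e., y^S lies in the (odd(S) △ T)-join polyhedron {y ∈ ℝ^E_{≥0} : y(δ(U)) ≥ 1 for every U with |U ∩ (odd(S) △ T)| odd}. -/
open Finset
open scoped Classical symmDiff

namespace MultiGraph

section Aux

variable {V E : Type*} [Fintype V] [DecidableEq V] [Fintype E] [DecidableEq E]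
variable (G : MultiGraph V E)

set_option linter.unusedSectionVars false

lemma aux_sum_deg (F : Finset E) (U : Finset V) :
    ∑ v ∈ U, G.deg F.val v
      = ∑ e ∈ F, ((if G.fst e ∈ U then 1 else 0) + (if G.snd e ∈ U then 1 else 0)) := by
  have h : ∀ v, G.deg F.val v
      = ∑ e ∈ F, ((if G.fst e = v then 1 else 0) + (if G.snd e = v then 1 else 0)) := by
    intro v; rfl
  simp_rw [h]
  rw [Finset.sum_comm]
  refine Finset.sum_congr rfl fun e _ => ?_
  rw [Finset.sum_add_distrib]
  congr 1 <;> simp [Finset.sum_ite_eq' U, eq_comm]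

lemma aux_parity (F : Finset E) (U : Finset V) :
    Odd ((U ∩ G.oddVerts F.val).card) ↔ Odd ((F ∩ G.cut U).card) := by
  have h1 : U ∩ G.oddVerts F.val = U.filter fun v => Odd (G.deg F.val v) := by
    ext v; simp [oddVerts, Finset.mem_filter, Finset.mem_inter]
  have h2 : F ∩ G.cut U = F.filter fun e =>
      Odd ((if G.fst e ∈ U then 1 else 0) + (if G.snd e ∈ U then 1 else 0)) := by
    ext e
    simp only [cut, Finset.mem_inter, Finset.mem_filter, Finset.mem_univ, true_and]
    constructor
    · rintro ⟨hF, h | h⟩ <;> simp [hF, h.1, h.2]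
    · intro ⟨hF, h⟩
      refine ⟨hF, ?_⟩
      by_cases ha : G.fst e ∈ U <;> by_cases hb : G.snd e ∈ U <;>
        simp_all [Nat.odd_iff]
  rw [h1, h2, ← Finset.odd_sum_iff_odd_card_odd, ← Finset.odd_sum_iff_odd_card_odd,
    aux_sum_deg]

lemma aux_cross {P : E → Prop} (hP : G.ConnectedOn P) {U : Finset V} {u w : V}
    (hu : u ∈ U) (hw : w ∉ U) : ∃ e, P e ∧ e ∈ G.cut U := by
  have key : ∀ w, Relation.ReflTransGen (G.Adj P) u w → w ∉ U →
      ∃ e, P e ∧ e ∈ G.cut U := by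
    intro w h
    induction h with
    | refl => intro h; exact absurd hu h
    | @tail b c hub hbc ih =>
      intro hc
      by_cases hb : b ∈ U
      · obtain ⟨e, hPe, h⟩ := hbc
        refine ⟨e, hPe, ?_⟩
        simp only [cut, Finset.mem_filter, Finset.mem_univ, true_and]
        rcases h with ⟨h1, h2⟩ | ⟨h1, h2⟩ <;> rw [h1, h2]
        · exact Or.inl ⟨hb, hc⟩
        · exact Or.inr ⟨hc, hb⟩
      · exact ih hb
  exact key w (hP u w) hw

lemma aux_tree_cross {S : Finset E} (hS : G.IsSpanningTree S) {U : Finset V}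
    (hU1 : U.Nonempty) (hU2 : U ≠ univ) : 1 ≤ (S ∩ G.cut U).card := by
  obtain ⟨u, hu⟩ := hU1
  obtain ⟨w, hw⟩ : ∃ w, w ∉ U := by
    by_contra h
    push_neg at h
    exact hU2 (Finset.eq_univ_iff_forall.mpr h)
  obtain ⟨e, he, hec⟩ := G.aux_cross hS.1 hu hw
  rw [Nat.one_le_iff_ne_zero, ← Nat.pos_iff_ne_zero, Finset.card_pos]
  exact ⟨e, Finset.mem_inter.mpr ⟨he, hec⟩⟩

lemma aux_symmDiff_card (P Q : Finset V) :
    (P ∆ Q).card + 2 * (P ∩ Q).card = P.card + Q.card := by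
  have h : (P ∆ Q).card = (P \ Q).card + (Q \ P).card := by
    rw [symmDiff_def]
    exact Finset.card_union_of_disjoint disjoint_sdiff_sdiff
  have h1 := Finset.card_sdiff_add_card_inter P Q
  have h2 := Finset.card_sdiff_add_card_inter Q P
  rw [Finset.inter_comm Q P] at h2
  omega

lemma aux_chi_sum (F C : Finset E) : ∑ e ∈ C, chi F e = ((F ∩ C).card : ℝ) := by
  rw [show (fun e => chi F e) = fun e => if e ∈ F then (1:ℝ) else 0 from rfl,
    Finset.sum_boole, Finset.filter_mem_eq_inter, Finset.inter_comm]

lemma aux_vC_nonneg {x : E → ℝ} {p : Finset E → ℝ} (hp0 : ∀ S, 0 ≤ p S)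
    {C : Finset E} (hC : G.Narrow x C) (e : E) : 0 ≤ G.vC x p C e := by
  apply mul_nonneg
  · apply le_of_lt
    apply div_pos one_pos
    linarith [hC.2]
  · apply Finset.sum_nonneg
    intro S _
    apply mul_nonneg
    · split
      · exact hp0 S
      · exact le_refl 0
    · unfold chi; split <;> norm_num

lemma aux_vC_sum {x : E → ℝ} {p : Finset E → ℝ} (hx0 : ∀ e, 0 ≤ x e)
    (hp0 : ∀ S, 0 ≤ p S) (hptree : ∀ S, p S ≠ 0 → G.IsSpanningTree S)
    (hpsum : ∑ S : Finset E, p S = 1)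
    (hdom : ∀ e, ∑ S : Finset E, p S * chi S e ≤ x e)
    {C : Finset E} {U : Finset V} (hU1 : U.Nonempty) (hU2 : U ≠ univ)
    (hCU : C = G.cut U) (hC : G.Narrow x C) :
    1 ≤ ∑ e ∈ C, G.vC x p C e := by
  have hxC : ∑ f ∈ C, x f < 2 := hC.2
  have hpos : (0:ℝ) < 2 - ∑ f ∈ C, x f := by linarith
  have hsum : ∑ e ∈ C, G.vC x p C e
      = (1 / (2 - ∑ f ∈ C, x f)) *
        ∑ S : Finset E, (if G.Lonely x S C then p S else 0) * (((S ∩ C).card : ℝ)) := by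
    unfold vC
    rw [← Finset.mul_sum, Finset.sum_comm]
    congr 1
    refine Finset.sum_congr rfl fun S _ => ?_
    rw [← Finset.mul_sum, aux_chi_sum, Finset.inter_assoc, Finset.inter_self]
  have hterm : ∀ S : Finset E,
      (if G.Lonely x S C then p S else 0) * (((S ∩ C).card : ℝ))
        = (if G.Lonely x S C then p S else 0) := by
    intro S
    by_cases h : G.Lonely x S C
    · simp [h, h.2]
    · simp [h]
  have hlower : 2 - ∑ f ∈ C, x f ≤ ∑ S : Finset E, (if G.Lonely x S C then p S else 0) := by
    have hb : ∀ S : Finset E,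
        2 * p S - (if G.Lonely x S C then p S else 0) ≤ p S * ((S ∩ C).card : ℝ) := by
      intro S
      by_cases hp : p S = 0
      · simp [hp]
      · have htree := hptree S hp
        have hcard : 1 ≤ (S ∩ C).card := by
          rw [hCU]; exact G.aux_tree_cross htree hU1 hU2
        rcases eq_or_lt_of_le hcard with h1 | h2
        · have hlone : G.Lonely x S C := ⟨hC, h1.symm⟩
          simp only [hlone, if_pos, ← h1, Nat.cast_one, mul_one]
          linarith
        · have hlone : ¬ G.Lonely x S C := by
            intro h
            rw [h.2] at h2
            exact lt_irrefl 1 h2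
          simp only [hlone, if_neg, not_false_iff, sub_zero]
          have : (2:ℝ) ≤ ((S ∩ C).card : ℝ) := by exact_mod_cast h2
          nlinarith [hp0 S]
    have hxc : ∑ S : Finset E, p S * ((S ∩ C).card : ℝ) ≤ ∑ f ∈ C, x f := by
      have : ∀ S : Finset E, p S * ((S ∩ C).card : ℝ) = ∑ e ∈ C, p S * chi S e := by
        intro S
        rw [← Finset.mul_sum, aux_chi_sum]
      simp_rw [this]
      rw [Finset.sum_comm]
      exact Finset.sum_le_sum fun e _ => hdom e
    have h2 := Finset.sum_le_sum fun S (_ : S ∈ (univ : Finset (Finset E))) => hb S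
    rw [Finset.sum_sub_distrib, ← Finset.mul_sum, hpsum] at h2
    linarith
  rw [hsum]
  simp_rw [hterm]
  rw [one_div_mul_eq_div, le_div_iff₀ hpos, one_mul]
  linarith

end Aux


variable {V E : Type*} [Fintype V] [DecidableEq V] [Fintype E] [DecidableEq E]

/-- For `α ≥ 0` and a spanning tree `S`, the vector
`y^S = (1/2)x* + α·χ^{I_S} + Σ_{C ∈ 𝒩\ℒ_S} max{1 − x*(C)/2 − α, 0}·v^C`
lies in the `(odd(S) △ T)`-join polyhedron. -/
theorem parity_correction_vector_bomc (G : MultiGraph V E) (hG : G.Connected)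
    (T : Finset V) (hT : Even T.card) (x : E → ℝ) (hx : G.LPFeasible T x)
    (p : Finset E → ℝ) (hp0 : ∀ S, 0 ≤ p S)
    (hptree : ∀ S, p S ≠ 0 → G.IsSpanningTree S)
    (hpsum : ∑ S : Finset E, p S = 1)
    (hdom : ∀ e, ∑ S : Finset E, p S * chi S e ≤ x e)
    (α : ℝ) (hα : 0 ≤ α) (S : Finset E) (hS : G.IsSpanningTree S)
    (I : Finset E) (hIS : I ⊆ S) (hIT : G.oddVerts I.val = T)
    (y : E → ℝ)
    (hy : y = fun e => (1 / 2) * x e + α * chi I e +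
      ∑ C ∈ G.narrowCuts x \ G.lonelyCuts x S,
        max (1 - (∑ f ∈ C, x f) / 2 - α) 0 * G.vC x p C e) :
    (∀ e, 0 ≤ y e) ∧
    (∀ U : Finset V, Odd ((U ∩ (G.oddVerts S.val ∆ T)).card) →
      1 ≤ ∑ e ∈ G.cut U, y e) := by
  have hx0 := hx.1
  subst hy
  set D := G.narrowCuts x \ G.lonelyCuts x S with hD
  have hDnarrow : ∀ C' ∈ D, G.Narrow x C' := fun C' hC' =>
    (Finset.mem_filter.mp (Finset.mem_sdiff.mp hC').1).2
  have hchinn : ∀ (F : Finset E) (e : E), (0:ℝ) ≤ chi F e := by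
    intro F e; unfold chi; split <;> norm_num
  have hynn : ∀ e, 0 ≤ (1 / 2) * x e + α * chi I e +
      ∑ C ∈ D, max (1 - (∑ f ∈ C, x f) / 2 - α) 0 * G.vC x p C e := by
    intro e
    have h1 : 0 ≤ (1/2) * x e := mul_nonneg (by norm_num) (hx0 e)
    have h2 : 0 ≤ α * chi I e := mul_nonneg hα (hchinn I e)
    have h3 : 0 ≤ ∑ C ∈ D, max (1 - (∑ f ∈ C, x f) / 2 - α) 0 * G.vC x p C e :=
      Finset.sum_nonneg fun C' hC' =>
        mul_nonneg (le_max_right _ _) (G.aux_vC_nonneg hp0 (hDnarrow C' hC') e)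
    linarith
  refine ⟨hynn, ?_⟩
  intro U hodd
  have hU1 : U.Nonempty := by
    rcases Finset.eq_empty_or_nonempty U with h | h
    · subst h; simp at hodd
    · exact h
  have hcutuniv : G.cut (univ : Finset V) = ∅ := by
    ext e; simp [cut]
  have hevenS : ¬ Odd (((univ : Finset V) ∩ G.oddVerts S.val).card) := by
    rw [G.aux_parity S univ, hcutuniv]
    simp
  have hevenI : ¬ Odd (((univ : Finset V) ∩ G.oddVerts I.val).card) := by
    rw [G.aux_parity I univ, hcutuniv]
    simp
  rw [← hIT] at hodd
  have hU2 : U ≠ univ := by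
    intro h; subst h
    have hd := inf_symmDiff_distrib_left (univ : Finset V) (G.oddVerts S.val)
      (G.oddVerts I.val)
    simp only [Finset.inf_eq_inter] at hd
    rw [hd] at hodd
    have hc := aux_symmDiff_card ((univ : Finset V) ∩ G.oddVerts S.val)
      ((univ : Finset V) ∩ G.oddVerts I.val)
    rw [Nat.odd_iff] at hodd
    rw [Nat.not_odd_iff] at hevenS hevenI
    omega
  have hCeq : ∑ e ∈ G.cut U, ((1 / 2) * x e + α * chi I e +
      ∑ C ∈ D, max (1 - (∑ f ∈ C, x f) / 2 - α) 0 * G.vC x p C e)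
      = (1/2) * (∑ e ∈ G.cut U, x e) + α * (((I ∩ G.cut U).card : ℝ)) +
        ∑ C' ∈ D, max (1 - (∑ f ∈ C', x f) / 2 - α) 0 *
          ∑ e ∈ G.cut U, G.vC x p C' e := by
    rw [Finset.sum_add_distrib, Finset.sum_add_distrib, ← Finset.mul_sum,
      ← Finset.mul_sum, aux_chi_sum]
    congr 1
    rw [Finset.sum_comm]
    exact Finset.sum_congr rfl fun C' _ => (Finset.mul_sum _ _ _).symm
  have hSnn : 0 ≤ ∑ C' ∈ D, max (1 - (∑ f ∈ C', x f) / 2 - α) 0 *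
      ∑ e ∈ G.cut U, G.vC x p C' e :=
    Finset.sum_nonneg fun C' hC' => mul_nonneg (le_max_right _ _)
      (Finset.sum_nonneg fun e _ => G.aux_vC_nonneg hp0 (hDnarrow C' hC') e)
  have hInn : (0:ℝ) ≤ ((I ∩ G.cut U).card : ℝ) := Nat.cast_nonneg _
  rw [hCeq]
  rcases le_or_gt 2 (∑ e ∈ G.cut U, x e) with h2 | h2
  · have := mul_nonneg hα hInn
    linarith
  · have hnarrow : G.Narrow x (G.cut U) := ⟨⟨U, hU1, hU2, rfl⟩, h2⟩
    have hTU : Odd ((T ∩ U).card) := by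
      by_contra h
      rw [Nat.not_odd_iff_even] at h
      have := hx.2.1 U hU1 hU2 h
      linarith
    have hIodd : Odd ((I ∩ G.cut U).card) := by
      rw [← G.aux_parity I U, Finset.inter_comm U, hIT]
      exact hTU
    have hSeven : ¬ Odd ((S ∩ G.cut U).card) := by
      rw [← G.aux_parity S U]
      have hd := inf_symmDiff_distrib_left U (G.oddVerts S.val) (G.oddVerts I.val)
      simp only [Finset.inf_eq_inter] at hd
      rw [hd] at hodd
      have hc := aux_symmDiff_card (U ∩ G.oddVerts S.val) (U ∩ G.oddVerts I.val)
      have hIU : Odd ((U ∩ G.oddVerts I.val).card) := by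
        rw [G.aux_parity I U]; exact hIodd
      rw [Nat.odd_iff] at hodd hIU
      rw [Nat.not_odd_iff]
      omega
    have hCD : G.cut U ∈ D := by
      rw [hD, Finset.mem_sdiff]
      constructor
      · rw [narrowCuts, Finset.mem_filter]
        exact ⟨Finset.mem_univ _, hnarrow⟩
      · rw [lonelyCuts, Finset.mem_filter]
        rintro ⟨-, hL⟩
        exact hSeven (by rw [hL.2]; exact odd_one)
    have hvc1 : 1 ≤ ∑ e ∈ G.cut U, G.vC x p (G.cut U) e :=
      G.aux_vC_sum hx0 hp0 hptree hpsum hdom hU1 hU2 rfl hnarrow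
    have hsingle : max (1 - (∑ f ∈ G.cut U, x f) / 2 - α) 0 *
        ∑ e ∈ G.cut U, G.vC x p (G.cut U) e ≤
        ∑ C' ∈ D, max (1 - (∑ f ∈ C', x f) / 2 - α) 0 *
          ∑ e ∈ G.cut U, G.vC x p C' e :=
      Finset.single_le_sum
        (f := fun C' => max (1 - (∑ f ∈ C', x f) / 2 - α) 0 *
          ∑ e ∈ G.cut U, G.vC x p C' e)
        (fun C' hC' => mul_nonneg (le_max_right _ _)
          (Finset.sum_nonneg fun e _ => G.aux_vC_nonneg hp0 (hDnarrow C' hC') e)) hCD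
    have hm1 : max (1 - (∑ f ∈ G.cut U, x f) / 2 - α) 0 ≤
        max (1 - (∑ f ∈ G.cut U, x f) / 2 - α) 0 *
          ∑ e ∈ G.cut U, G.vC x p (G.cut U) e :=
      le_mul_of_one_le_right (le_max_right _ _) hvc1
    have hIcard : (1:ℝ) ≤ ((I ∩ G.cut U).card : ℝ) := by
      have h1 : 1 ≤ (I ∩ G.cut U).card := by
        rw [Nat.odd_iff] at hIodd; omega
      exact_mod_cast h1
    have hα2 : α * 1 ≤ α * ((I ∩ G.cut U).card : ℝ) :=
      mul_le_mul_of_nonneg_left hIcard hα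
    have hmax : 1 - (∑ f ∈ G.cut U, x f) / 2 - α ≤
        max (1 - (∑ f ∈ G.cut U, x f) / 2 - α) 0 := le_max_left _ _
    linarith

end MultiGraph
end

section
/- Let S be the edge set of a spanning tree of G. Every lonely edge of S belongs to the unique T-join I_S contained in S, i.e., L_S ⊆ I_S. -/
open Finset
open scoped Classical symmDiff

namespace MultiGraph

variable {V E : Type*} [Fintype V] [DecidableEq V] [Fintype E] [DecidableEq E]

lemma zmod2_natCast_eq_one_iff (n : ℕ) : (n : ZMod 2) = 1 ↔ Odd n := by
  rw [Nat.odd_iff, ← ZMod.natCast_mod n 2]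
  rcases Nat.mod_two_eq_zero_or_one n with h | h <;> rw [h] <;> norm_num <;> decide

lemma parity_cut (G : MultiGraph V E) (U : Finset V) (I : Finset E) :
    ((G.oddVerts I.val ∩ U).card : ZMod 2) = ((I ∩ G.cut U).card : ZMod 2) := by
  classical
  have hdeg : ∀ v, G.deg I.val v =
      ∑ e ∈ I, ((if G.fst e = v then 1 else 0) + (if G.snd e = v then 1 else 0)) := by
    intro v; rfl
  have hL : G.oddVerts I.val ∩ U = U.filter (fun v => Odd (G.deg I.val v)) := by
    ext v; simp [oddVerts, Finset.mem_filter, and_comm]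
  have hR : I ∩ G.cut U = I.filter (fun e => e ∈ G.cut U) := by
    ext e; simp [Finset.mem_filter]
  rw [hL, hR]
  rw [Finset.card_filter, Finset.card_filter]
  push_cast
  have step1 : (∑ v ∈ U, (if Odd (G.deg I.val v) then (1 : ZMod 2) else 0))
      = ∑ v ∈ U, ((G.deg I.val v : ℕ) : ZMod 2) := by
    refine Finset.sum_congr rfl fun v _ => ?_
    by_cases h : Odd (G.deg I.val v)
    · rw [if_pos h, (zmod2_natCast_eq_one_iff _).2 h]
    · rw [if_neg h]
      obtain ⟨k, hk⟩ := Nat.not_odd_iff_even.1 h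
      rw [hk]
      push_cast
      rw [show ((k : ZMod 2) + k = 2 * k) by ring, show ((2 : ZMod 2) = 0) by decide,
        zero_mul]
  rw [step1]
  have step2 : (∑ v ∈ U, ((G.deg I.val v : ℕ) : ZMod 2))
      = ∑ e ∈ I, (((if G.fst e ∈ U then 1 else 0) : ZMod 2)
        + (if G.snd e ∈ U then 1 else 0)) := by
    simp only [hdeg]
    push_cast
    rw [Finset.sum_comm]
    refine Finset.sum_congr rfl fun e _ => ?_
    rw [Finset.sum_add_distrib]
    congr 1
    · rw [Finset.sum_ite_eq U (G.fst e) (fun _ => (1 : ZMod 2))]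
    · rw [Finset.sum_ite_eq U (G.snd e) (fun _ => (1 : ZMod 2))]
  rw [step2]
  refine Finset.sum_congr rfl fun e _ => ?_
  have hmem : e ∈ G.cut U ↔
      ((G.fst e ∈ U ∧ G.snd e ∉ U) ∨ (G.fst e ∉ U ∧ G.snd e ∈ U)) := by
    simp [cut]
  by_cases h1 : G.fst e ∈ U <;> by_cases h2 : G.snd e ∈ U <;>
    simp [h1, h2, hmem] <;> decide

/-- Every lonely edge of a spanning tree `S` belongs to the unique
`T`-join `I_S` contained in `S`, i.e. `L_S ⊆ I_S`. -/
theorem lonelyEdges_subset_Tjoin (G : MultiGraph V E) (hG : G.Connected)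
    (T : Finset V) (hT : Even T.card) (x : E → ℝ) (hx : G.LPFeasible T x)
    (S : Finset E) (hS : G.IsSpanningTree S)
    (I : Finset E) (hIS : I ⊆ S) (hIT : G.oddVerts I.val = T) :
    G.lonelyEdges x S ⊆ I := by
  intro e he
  rw [lonelyEdges, Finset.mem_filter] at he
  obtain ⟨heS, C, ⟨⟨⟨U, hU1, hU2, hCU⟩, hxC⟩, hcard⟩, heC⟩ := he
  -- the narrow cut is a T-cut
  have hodd : Odd ((T ∩ U).card) := by
    by_contra h
    have h2 := hx.2.1 U hU1 hU2 (Nat.not_odd_iff_even.1 h)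
    rw [← hCU] at h2
    linarith
  -- parity of I across the cut
  have hIparity : Odd ((I ∩ G.cut U).card) := by
    rw [← zmod2_natCast_eq_one_iff, ← parity_cut, hIT, zmod2_natCast_eq_one_iff]
    exact hodd
  have hne : (I ∩ C).Nonempty := by
    rw [hCU]
    rw [← Finset.card_pos]
    exact hIparity.pos
  obtain ⟨f, hf⟩ := hne
  have hfS : f ∈ S ∩ C := by
    rw [Finset.mem_inter] at hf ⊢
    exact ⟨hIS hf.1, hf.2⟩
  have heSC : e ∈ S ∩ C := Finset.mem_inter.2 ⟨heS, heC⟩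
  have : f = e := by
    obtain ⟨g, hg⟩ := Finset.card_eq_one.1 hcard
    rw [hg, Finset.mem_singleton] at hfS heSC
    rw [hfS, heSC]
  rw [← this]
  exact (Finset.mem_inter.1 hf).1

end MultiGraph
end

section
/- It holds that Σ_{C∈𝒩} (2 − x*(C))·v^C = L_p, and L_p ≤ I_p componentwise. -/
open Finset
open scoped Classical symmDiff

/-!
A lonely edge `e` of a spanning tree `S` lies in exactly one lonely cut: if `S ∩ δ(U) = {e}` then
`δ(U)` is the fundamental cut of `e` in `S`, i.e. `U` or its complement is the component of `S - e`
containing an endpoint of `e`. Summing `χ^{S ∩ C}` over `C ∈ ℒ_S` therefore gives `χ^{L_S}`, which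
is the first identity after cancelling `2 - x*(C) > 0`. For the inequality, a narrow cut `δ(U)`
has `|T ∩ U|` odd by LP feasibility, so the `T`-join `I_S` meets `δ(U)` an odd number of times
(parity of degrees summed over `U`); as `I_S ⊆ S` and `S ∩ δ(U) = {e}`, this forces `e ∈ I_S`.
-/

namespace MultiGraph

variable {V E : Type*} (G : MultiGraph V E)

lemma chi_le_chi [DecidableEq E] {F F' : Finset E} (h : F ⊆ F') (e : E) : chi F e ≤ chi F' e := by
  unfold chi
  split_ifs with h₁ h₂ <;> first | exact absurd (h h₁) h₂ | norm_num

lemma mem_reachSet_iff [Fintype V] {P : E → Prop} {v w : V} :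
    w ∈ G.reachSet P v ↔ Relation.ReflTransGen (G.Adj P) v w := by
  simp [reachSet]

lemma mem_reachSet_fst_or_snd [Fintype V] {S : Finset E} (hS : G.ConnectedOn (· ∈ S)) (e : E)
    (w : V) :
    w ∈ G.reachSet (fun f => f ∈ S ∧ f ≠ e) (G.fst e) ∨
      w ∈ G.reachSet (fun f => f ∈ S ∧ f ≠ e) (G.snd e) := by
  simp only [mem_reachSet_iff]
  induction hS (G.fst e) w with
  | refl => exact Or.inl .refl
  | tail _ hadj ih =>
    obtain ⟨f, hfS, hends⟩ := hadj
    by_cases hfe : f = e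
    · subst hfe
      rcases hends with ⟨-, rfl⟩ | ⟨rfl, -⟩
      exacts [Or.inr .refl, Or.inl .refl]
    · exact ih.imp (·.tail ⟨f, ⟨hfS, hfe⟩, hends⟩) (·.tail ⟨f, ⟨hfS, hfe⟩, hends⟩)

variable [DecidableEq V] [Fintype E]

lemma mem_cut_iff {U : Finset V} {e : E} :
    e ∈ G.cut U ↔ (G.fst e ∈ U ∧ G.snd e ∉ U) ∨ (G.fst e ∉ U ∧ G.snd e ∈ U) := by
  simp [cut]

variable [Fintype V]

lemma mem_narrowCuts {x : E → ℝ} {C : Finset E} : C ∈ G.narrowCuts x ↔ G.Narrow x C := by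
  simp [narrowCuts]

lemma LPFeasible.odd_card_inter {G : MultiGraph V E} {T : Finset V} {x : E → ℝ}
    (hx : G.LPFeasible T x) {U : Finset V} (hU : U.Nonempty) (hU' : U ≠ univ)
    (hnarrow : ∑ f ∈ G.cut U, x f < 2) : Odd (T ∩ U).card := by
  by_contra h
  exact (hx.2.1 U hU hU' (Nat.not_odd_iff_even.1 h)).not_gt hnarrow

lemma cut_compl (U : Finset V) : G.cut Uᶜ = G.cut U := by
  ext e
  simp only [mem_cut_iff, Finset.mem_compl]
  tauto

lemma reachSet_subset {P : E → Prop} {U : Finset V} (hU : ∀ f, P f → f ∉ G.cut U)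
    {z : V} (hz : z ∈ U) : G.reachSet P z ⊆ U := by
  intro w hw
  rw [mem_reachSet_iff] at hw
  induction hw with
  | refl => exact hz
  | tail _ hadj ih =>
    obtain ⟨f, hf, hends⟩ := hadj
    have := hU f hf
    rw [mem_cut_iff] at this
    rcases hends with ⟨rfl, rfl⟩ | ⟨rfl, rfl⟩ <;> tauto

variable {G} [DecidableEq E]

lemma eq_reachSet_fst {S : Finset E} (hS : G.ConnectedOn (· ∈ S)) {e : E} {U : Finset V}
    (hSU : S ∩ G.cut U = {e}) (hfst : G.fst e ∈ U) (hsnd : G.snd e ∉ U) :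
    U = G.reachSet (fun f => f ∈ S ∧ f ≠ e) (G.fst e) := by
  have hcross : ∀ {U' : Finset V}, S ∩ G.cut U' = {e} → ∀ f, f ∈ S ∧ f ≠ e → f ∉ G.cut U' :=
    fun hSU' f ⟨hfS, hfe⟩ hf => hfe (mem_singleton.1 (hSU' ▸ mem_inter.2 ⟨hfS, hf⟩))
  refine Subset.antisymm ?_ (G.reachSet_subset (hcross hSU) hfst)
  intro w hw
  refine (G.mem_reachSet_fst_or_snd hS e w).resolve_right fun hw' => ?_
  have := G.reachSet_subset (hcross (U' := Uᶜ) (by rwa [cut_compl])) (mem_compl.2 hsnd) hw'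
  exact mem_compl.1 this hw

lemma cut_eq_cut_reachSet {S : Finset E} (hS : G.ConnectedOn (· ∈ S)) {e : E} {U : Finset V}
    (hSU : S ∩ G.cut U = {e}) :
    G.cut U = G.cut (G.reachSet (fun f => f ∈ S ∧ f ≠ e) (G.fst e)) := by
  have he : e ∈ G.cut U := (mem_inter.1 (hSU ▸ mem_singleton_self e)).2
  rcases G.mem_cut_iff.1 he with ⟨hfst, hsnd⟩ | ⟨hfst, hsnd⟩
  · rw [← eq_reachSet_fst hS hSU hfst hsnd]
  · rw [← eq_reachSet_fst hS (U := Uᶜ) (by rwa [cut_compl]) (mem_compl.2 hfst)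
      (by simpa using hsnd), cut_compl]

lemma cut_eq_of_inter_cut_eq_singleton {S : Finset E} (hS : G.ConnectedOn (· ∈ S)) {e : E}
    {U U' : Finset V} (hU : S ∩ G.cut U = {e}) (hU' : S ∩ G.cut U' = {e}) :
    G.cut U = G.cut U' := by
  rw [cut_eq_cut_reachSet hS hU, cut_eq_cut_reachSet hS hU']

lemma natCast_zmod_two_eq_ite (n : ℕ) : (n : ZMod 2) = if Odd n then 1 else 0 := by
  split_ifs with h
  · exact ZMod.natCast_eq_one_iff_odd.2 h
  · exact ZMod.natCast_eq_zero_iff_even.2 (Nat.not_odd_iff_even.1 h)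

variable (G) in
/-- Summing degrees over `U` counts edges inside `U` twice and edges of `δ(U)` once. -/
lemma card_inter_cut_zmod_two (F : Finset E) (U : Finset V) :
    ((F ∩ G.cut U).card : ZMod 2) = ((G.oddVerts F.val ∩ U).card : ZMod 2) := by
  have hdeg : ∀ v, (G.deg F.val v : ZMod 2) =
      ∑ f ∈ F, ((if G.fst f = v then 1 else 0) + (if G.snd f = v then 1 else 0)) := by
    intro v
    simp [deg, apply_ite (Nat.cast : ℕ → ZMod 2)]
  calc ((F ∩ G.cut U).card : ZMod 2)
      = ∑ f ∈ F, if f ∈ G.cut U then 1 else 0 := by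
        rw [← natCast_card_filter, filter_mem_eq_inter]
    _ = ∑ f ∈ F, ((if G.fst f ∈ U then 1 else 0) + (if G.snd f ∈ U then 1 else 0)) := by
        refine sum_congr rfl fun f _ => ?_
        by_cases h₁ : G.fst f ∈ U <;> by_cases h₂ : G.snd f ∈ U <;> simp [mem_cut_iff, h₁, h₂]
        decide
    _ = ∑ v ∈ U, (G.deg F.val v : ZMod 2) := by
        simp_rw [hdeg]
        rw [sum_comm]
        simp [sum_add_distrib]
    _ = ∑ v ∈ U, if Odd (G.deg F.val v) then 1 else 0 :=
        sum_congr rfl fun v _ => natCast_zmod_two_eq_ite _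
    _ = ((G.oddVerts F.val ∩ U).card : ZMod 2) := by
        rw [sum_boole, inter_comm, ← filter_mem_eq_inter]
        simp [oddVerts]

variable {x : E → ℝ} {S C : Finset E} {e : E}

lemma lonelyCuts_eq_filter_narrowCuts (x : E → ℝ) (S : Finset E) :
    G.lonelyCuts x S = (G.narrowCuts x).filter (G.Lonely x S) := by
  ext C
  simp only [lonelyCuts, mem_filter, mem_univ, true_and, mem_narrowCuts]
  exact ⟨fun h => ⟨h.1, h⟩, And.right⟩

lemma mem_lonelyEdges : e ∈ G.lonelyEdges x S ↔ e ∈ S ∧ ∃ C, G.Lonely x S C ∧ e ∈ C := by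
  simp [lonelyEdges]

lemma Lonely.inter_eq_singleton (hC : G.Lonely x S C) (heS : e ∈ S) (heC : e ∈ C) :
    S ∩ C = {e} := by
  obtain ⟨a, ha⟩ := card_eq_one.1 hC.2
  have he : e ∈ S ∩ C := mem_inter.2 ⟨heS, heC⟩
  rw [ha, mem_singleton] at he
  rw [ha, he]

lemma Lonely.eq_of_mem {C' : Finset E} (hS : G.ConnectedOn (· ∈ S)) (hC : G.Lonely x S C)
    (hC' : G.Lonely x S C') (heS : e ∈ S) (heC : e ∈ C) (heC' : e ∈ C') : C = C' := by
  obtain ⟨U, -, -, rfl⟩ := hC.1.1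
  obtain ⟨U', -, -, rfl⟩ := hC'.1.1
  exact cut_eq_of_inter_cut_eq_singleton hS (hC.inter_eq_singleton heS heC)
    (hC'.inter_eq_singleton heS heC')

lemma sum_lonelyCuts_chi_inter (hS : G.ConnectedOn (· ∈ S)) (x : E → ℝ) (e : E) :
    ∑ C ∈ G.lonelyCuts x S, chi (S ∩ C) e = chi (G.lonelyEdges x S) e := by
  simp only [chi, sum_boole]
  split_ifs with he
  · obtain ⟨heS, C₀, hC₀, heC₀⟩ := G.mem_lonelyEdges.1 he
    suffices {C ∈ G.lonelyCuts x S | e ∈ S ∩ C} = {C₀} by rw [this, card_singleton, Nat.cast_one]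
    refine eq_singleton_iff_unique_mem.2 ⟨?_, fun C hC => ?_⟩
    · simpa [lonelyCuts, hC₀] using And.intro heS heC₀
    · simp only [lonelyCuts, mem_filter, mem_univ, true_and, mem_inter] at hC
      exact hC.1.eq_of_mem hS hC₀ heS hC.2.2 heC₀
  · suffices {C ∈ G.lonelyCuts x S | e ∈ S ∩ C} = ∅ by rw [this, card_empty, Nat.cast_zero]
    refine filter_eq_empty_iff.2 fun C hC heSC => he ?_
    simp only [lonelyCuts, mem_filter, mem_univ, true_and] at hC
    exact G.mem_lonelyEdges.2 ⟨(mem_inter.1 heSC).1, C, hC, (mem_inter.1 heSC).2⟩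

lemma sum_narrowCuts_ite_lonely_mul_chi (a : ℝ) :
    ∑ C ∈ G.narrowCuts x, (if G.Lonely x S C then a else 0) * chi (S ∩ C) e =
      a * ∑ C ∈ G.lonelyCuts x S, chi (S ∩ C) e := by
  simp only [ite_mul, zero_mul, ← sum_filter, lonelyCuts_eq_filter_narrowCuts, mul_sum]

lemma Narrow.sub_mul_vC {p : Finset E → ℝ} (hC : G.Narrow x C) (e : E) :
    (2 - ∑ f ∈ C, x f) * G.vC x p C e =
      ∑ S : Finset E, (if G.Lonely x S C then p S else 0) * chi (S ∩ C) e := by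
  rw [vC, ← mul_assoc, mul_one_div_cancel (by linarith [hC.2]), one_mul]

lemma lonelyEdges_subset_of_oddVerts_eq {T : Finset V} {J : Finset E} (hx : G.LPFeasible T x)
    (hJS : J ⊆ S) (hJ : G.oddVerts J.val = T) : G.lonelyEdges x S ⊆ J := by
  intro e he
  obtain ⟨heS, C, hC, heC⟩ := G.mem_lonelyEdges.1 he
  obtain ⟨⟨U, hU, hU', rfl⟩, hnarrow⟩ := hC.1
  have hodd : Odd (J ∩ G.cut U).card := by
    rw [← ZMod.natCast_eq_one_iff_odd, card_inter_cut_zmod_two, hJ, ZMod.natCast_eq_one_iff_odd]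
    exact hx.odd_card_inter hU hU' hnarrow
  obtain ⟨f, hf⟩ := card_pos.1 hodd.pos
  obtain ⟨hfJ, hfC⟩ := mem_inter.1 hf
  have hfS : f ∈ S ∩ G.cut U := mem_inter.2 ⟨hJS hfJ, hfC⟩
  rw [hC.inter_eq_singleton heS heC, mem_singleton] at hfS
  exact hfS ▸ hfJ

end MultiGraph

namespace MultiGraph

variable {V E : Type*} [Fintype V] [DecidableEq V] [Fintype E] [DecidableEq E]

theorem lonely_vector_identity_general (G : MultiGraph V E)
    (T : Finset V) (x : E → ℝ) (hx : G.LPFeasible T x)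
    (p : Finset E → ℝ) (hp0 : ∀ S, 0 ≤ p S)
    (hptree : ∀ S, p S ≠ 0 → G.IsSpanningTree S)
    (I : Finset E → Finset E)
    (hI : ∀ S, p S ≠ 0 → I S ⊆ S ∧ G.oddVerts (I S).val = T) :
    (∀ e, ∑ C ∈ G.narrowCuts x, (2 - ∑ f ∈ C, x f) * G.vC x p C e =
      ∑ S : Finset E, p S * chi (G.lonelyEdges x S) e) ∧
    (∀ e, (∑ S : Finset E, p S * chi (G.lonelyEdges x S) e) ≤
      ∑ S : Finset E, p S * chi (I S) e) := by
  refine ⟨fun e => ?_, fun e => sum_le_sum fun S _ => ?_⟩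
  · calc ∑ C ∈ G.narrowCuts x, (2 - ∑ f ∈ C, x f) * G.vC x p C e
        = ∑ S, ∑ C ∈ G.narrowCuts x, (if G.Lonely x S C then p S else 0) * chi (S ∩ C) e :=
          (sum_congr rfl fun C hC => (G.mem_narrowCuts.1 hC).sub_mul_vC e).trans sum_comm
      _ = ∑ S, p S * chi (G.lonelyEdges x S) e := by
          refine sum_congr rfl fun S _ => ?_
          rw [sum_narrowCuts_ite_lonely_mul_chi]
          by_cases hS : p S = 0
          · simp [hS]
          · rw [sum_lonelyCuts_chi_inter (hptree S hS).1]
  · by_cases hS : p S = 0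
    · simp [hS]
    · obtain ⟨hIS, hIT⟩ := hI S hS
      exact mul_le_mul_of_nonneg_left (chi_le_chi (lonelyEdges_subset_of_oddVerts_eq hx hIS hIT) e)
        (hp0 S)

/-- `Σ_{C ∈ 𝒩} (2 − x*(C))·v^C = L_p`, and `L_p ≤ I_p`
componentwise, where `L_p := Σ_S p_S·χ^{L_S}` and `I_p := Σ_S p_S·χ^{I_S}`. -/
theorem lonely_vector_identity (G : MultiGraph V E) (hG : G.Connected)
    (T : Finset V) (hT : Even T.card) (x : E → ℝ) (hx : G.LPFeasible T x)
    (p : Finset E → ℝ) (hp0 : ∀ S, 0 ≤ p S)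
    (hptree : ∀ S, p S ≠ 0 → G.IsSpanningTree S)
    (hpsum : ∑ S : Finset E, p S = 1)
    (hdom : ∀ e, ∑ S : Finset E, p S * chi S e ≤ x e)
    (I : Finset E → Finset E)
    (hI : ∀ S, p S ≠ 0 → I S ⊆ S ∧ G.oddVerts (I S).val = T) :
    (∀ e, ∑ C ∈ G.narrowCuts x, (2 - ∑ f ∈ C, x f) * G.vC x p C e =
      ∑ S : Finset E, p S * chi (G.lonelyEdges x S) e) ∧
    (∀ e, (∑ S : Finset E, p S * chi (G.lonelyEdges x S) e) ≤
      ∑ S : Finset E, p S * chi (I S) e) :=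
  lonely_vector_identity_general G T x hx p hp0 hptree I hI

end MultiGraph
end

section
/- Let S be the edge set of a spanning tree of G and ℒ_S its set of lonely cuts. Then there exists a function f: {(e,C) : e ∈ C, C ∈ ℒ_S} → ℝ≥0 such that Σ_{C∈ℒ_S: e∈C} f(e,C) ≤ x*_e for every edge e ∈ E and Σ_{e∈C} f(e,C) ≥ 1 for every C ∈ ℒ_S. -/
open Finset
open scoped Classical symmDiff

/-!
Each lonely cut `C ∈ ℒ_S` meets the connected graph `S` in a single edge `e_C`. Two cuts `δ(U)`,
`δ(W)` meeting `S` in the same edges coincide: `δ(U ∆ W) = δ(U) ∆ δ(W)` is not crossed by `S`, so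
`U ∆ W` is `∅` or `V`. Hence `e_C` crosses `C` and no other cut of `ℒ_S`, so for `ℬ ⊆ ℒ_S` the
common refinement of the shores of the cuts in `ℬ` has at least `|ℬ| + 1` classes, and the
partition inequality of the LP gives the fractional Hall condition `|ℬ| ≤ x*(⋃ ℬ)`.

Fractional Hall is proved by induction on `|𝒞|` plus the number of edges with positive supply:
send supply from an edge `e₀ ∈ C₀` to `C₀` until either `e₀` is exhausted or a subfamily avoiding
`C₀` becomes tight, in which case the problem splits into that subfamily and the rest, with the
tight subfamily using exactly the edges it covers.
-/

namespace Finset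

variable {ι : Type*} [DecidableEq ι]

theorem erase_symmDiff_erase (a b : Finset ι) (i : ι) :
    a.erase i ∆ b.erase i = (a ∆ b).erase i := by
  ext j
  simp only [mem_symmDiff, mem_erase]
  tauto

theorem card_add_one_le_of_forall_exists_symmDiff_eq_singleton {X : Finset (Finset ι)}
    (hX : X.Nonempty) {I : Finset ι} (h : ∀ i ∈ I, ∃ a ∈ X, ∃ b ∈ X, a ∆ b = {i}) :
    #I + 1 ≤ #X := by
  induction I using Finset.induction_on generalizing X with
  | empty => simpa using hX.card_pos
  | @insert i₀ I hi₀ ih =>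
    have hproj : #I + 1 ≤ #(X.image (·.erase i₀)) := by
      refine ih (hX.image _) fun i hi => ?_
      obtain ⟨a, ha, b, hb, hab⟩ := h i (mem_insert_of_mem hi)
      refine ⟨a.erase i₀, mem_image_of_mem _ ha, b.erase i₀, mem_image_of_mem _ hb, ?_⟩
      rw [erase_symmDiff_erase, hab,
        erase_eq_of_notMem (notMem_singleton.2 (hi.ne_of_notMem hi₀).symm)]
    have hlt : #(X.image (·.erase i₀)) < #X := by
      obtain ⟨a, ha, b, hb, hab⟩ := h i₀ (mem_insert_self i₀ I)
      refine card_image_le.lt_of_ne fun hcard => ?_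
      have hab' : a.erase i₀ = b.erase i₀ := by
        rw [← symmDiff_eq_empty, erase_symmDiff_erase, hab, erase_singleton]
      have : a = b := card_image_iff.1 hcard ha hb hab'
      simp [this] at hab
    rw [card_insert_of_notMem hi₀]
    omega

section

variable {β : Type*} [Fintype β] {y z : β → ℝ}

theorem card_filter_pos_le_of_le (hyz : y ≤ z) : #{b | 0 < y b} ≤ #{b | 0 < z b} :=
  card_le_card (monotone_filter_right _ fun b _ hb => hb.trans_le (hyz b))

theorem card_filter_pos_lt_of_le (hyz : y ≤ z) {b₀ : β} (hy : y b₀ ≤ 0) (hz : 0 < z b₀) :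
    #{b | 0 < y b} < #{b | 0 < z b} :=
  card_lt_card <| (ssubset_iff_of_subset <| monotone_filter_right _ fun b _ hb =>
    hb.trans_le (hyz b)).2 ⟨b₀, by simpa using hz, by simpa using hy⟩

end

end Finset

theorem sub_single_nonneg {β : Type*} [DecidableEq β] {y : β → ℝ} (hy : 0 ≤ y) {b : β} {τ : ℝ}
    (hτ : τ ≤ y b) : 0 ≤ y - Pi.single b τ := by
  intro b'
  rcases eq_or_ne b' b with rfl | hb
  · simpa using hτ
  · simpa [hb] using hy b'

section FractionalHall

variable {α : Type*} [DecidableEq α]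

def HallCondition (𝒞 : Finset (Finset α)) (x : α → ℝ) (d : Finset α → ℝ) : Prop :=
  ∀ ℬ ⊆ 𝒞, ∑ C ∈ ℬ, d C ≤ ∑ e ∈ ℬ.sup id, x e

structure IsFractionalAssignment (𝒞 : Finset (Finset α)) (x : α → ℝ) (d : Finset α → ℝ)
    (f : α → Finset α → ℝ) : Prop where
  nonneg : ∀ e C, 0 ≤ f e C
  sum_le_supply : ∀ e, ∑ C ∈ 𝒞.filter (e ∈ ·), f e C ≤ x e
  demand_le_sum : ∀ C ∈ 𝒞, d C ≤ ∑ e ∈ C, f e C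

variable {𝒞 ℬ 𝒜 : Finset (Finset α)} {x x₁ x₂ : α → ℝ} {d d₁ d₂ : Finset α → ℝ}
  {f₁ f₂ : α → Finset α → ℝ}

namespace IsFractionalAssignment

theorem add (h₁ : IsFractionalAssignment 𝒞 x₁ d₁ f₁) (h₂ : IsFractionalAssignment 𝒞 x₂ d₂ f₂) :
    IsFractionalAssignment 𝒞 (x₁ + x₂) (d₁ + d₂) (f₁ + f₂) where
  nonneg e C := add_nonneg (h₁.nonneg e C) (h₂.nonneg e C)
  sum_le_supply e := by
    simpa only [Pi.add_apply, sum_add_distrib] using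
      add_le_add (h₁.sum_le_supply e) (h₂.sum_le_supply e)
  demand_le_sum C hC := by
    simpa only [Pi.add_apply, sum_add_distrib] using
      add_le_add (h₁.demand_le_sum C hC) (h₂.demand_le_sum C hC)

theorem union (h₁ : IsFractionalAssignment ℬ x₁ d f₁) (h₂ : IsFractionalAssignment 𝒜 x₂ d f₂)
    (hdisj : Disjoint ℬ 𝒜) :
    IsFractionalAssignment (ℬ ∪ 𝒜) (x₁ + x₂) d fun e C => if C ∈ ℬ then f₁ e C else f₂ e C where
  nonneg e C := by split_ifs <;> simp only [h₁.nonneg, h₂.nonneg]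
  sum_le_supply e := by
    rw [filter_union, sum_union (disjoint_filter_filter hdisj)]
    refine add_le_add ((sum_congr rfl fun C hC => ?_).trans_le (h₁.sum_le_supply e))
      ((sum_congr rfl fun C hC => ?_).trans_le (h₂.sum_le_supply e))
    · rw [if_pos (mem_filter.1 hC).1]
    · rw [if_neg (disjoint_right.1 hdisj (mem_filter.1 hC).1)]
  demand_le_sum C hC := by
    rcases mem_union.1 hC with hCℬ | hC𝒜
    · simpa only [if_pos hCℬ] using h₁.demand_le_sum C hCℬ
    · simpa only [if_neg (disjoint_right.1 hdisj hC𝒜)] using h₂.demand_le_sum C hC𝒜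

theorem union_sdiff (h₁ : IsFractionalAssignment ℬ ((ℬ.sup id).piecewise x 0) d f₁) (hℬ : ℬ ⊆ 𝒞)
    (h₂ : IsFractionalAssignment (𝒞 \ ℬ) ((ℬ.sup id).piecewise 0 x) d f₂) :
    IsFractionalAssignment 𝒞 x d fun e C => if C ∈ ℬ then f₁ e C else f₂ e C := by
  have hx : (ℬ.sup id).piecewise x 0 + (ℬ.sup id).piecewise (0 : α → ℝ) x = x := by
    ext e; by_cases he : e ∈ ℬ.sup id <;> simp [he]
  simpa only [union_sdiff_of_subset hℬ, hx] using h₁.union h₂ disjoint_sdiff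

end IsFractionalAssignment

theorem isFractionalAssignment_single {C₀ : Finset α} {e₀ : α} {τ : ℝ} (hC₀ : C₀ ∈ 𝒞)
    (he₀ : e₀ ∈ C₀) (hτ : 0 ≤ τ) :
    IsFractionalAssignment 𝒞 (Pi.single e₀ τ) (Pi.single C₀ τ) (Pi.single e₀ (Pi.single C₀ τ)) where
  nonneg e C := by
    rcases eq_or_ne e e₀ with rfl | he
    · rcases eq_or_ne C C₀ with rfl | hC <;> simp [*]
    · simp [he]
  sum_le_supply e := by
    rcases eq_or_ne e e₀ with rfl | he
    · simp [sum_pi_single', hC₀, he₀]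
    · simp [he]
  demand_le_sum C hC := by
    rcases eq_or_ne C C₀ with rfl | hC
    · simp [Pi.single_apply, ite_apply, he₀]
    · simp [Pi.single_apply, ite_apply, hC]

theorem IsFractionalAssignment.of_sub_single {C₀ : Finset α} {e₀ : α} {τ : ℝ}
    {g : α → Finset α → ℝ}
    (hg : IsFractionalAssignment 𝒞 (x - Pi.single e₀ τ) (d - Pi.single C₀ τ) g)
    (hC₀ : C₀ ∈ 𝒞) (he₀ : e₀ ∈ C₀) (hτ : 0 ≤ τ) :
    IsFractionalAssignment 𝒞 x d (g + Pi.single e₀ (Pi.single C₀ τ)) := by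
  simpa only [sub_add_cancel] using hg.add (isFractionalAssignment_single hC₀ he₀ hτ)

namespace HallCondition

theorem demand_le_sum (h : HallCondition 𝒞 x d) {C : Finset α} (hC : C ∈ 𝒞) :
    d C ≤ ∑ e ∈ C, x e := by
  simpa using h {C} (singleton_subset_iff.2 hC)

theorem isFractionalAssignment_zero (h : HallCondition 𝒞 x d) (hx : 0 ≤ x)
    (hzero : ∀ C ∈ 𝒞, ∀ e ∈ C, x e = 0) : IsFractionalAssignment 𝒞 x d 0 where
  nonneg _ _ := le_rfl
  sum_le_supply e := by simpa using hx e
  demand_le_sum C hC := by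
    simpa [sum_eq_zero (hzero C hC)] using h.demand_le_sum hC

theorem sub_single (h : HallCondition 𝒞 x d) {C₀ : Finset α} {e₀ : α} (he₀ : e₀ ∈ C₀) {τ : ℝ}
    (hτ : ∀ ℬ ⊆ 𝒞, C₀ ∉ ℬ → e₀ ∈ ℬ.sup id → τ ≤ ∑ e ∈ ℬ.sup id, x e - ∑ C ∈ ℬ, d C) :
    HallCondition 𝒞 (x - Pi.single e₀ τ) (d - Pi.single C₀ τ) := by
  intro ℬ hℬ
  have hle := h ℬ hℬ
  simp only [Pi.sub_apply, sum_sub_distrib, sum_pi_single']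
  by_cases hC₀ : C₀ ∈ ℬ
  · have : e₀ ∈ ℬ.sup id := mem_sup.2 ⟨C₀, hC₀, he₀⟩
    simp only [hC₀, this, if_true]
    linarith
  by_cases he₀ℬ : e₀ ∈ ℬ.sup id
  · simp only [hC₀, he₀ℬ, if_true, if_false]
    linarith [hτ ℬ hℬ hC₀ he₀ℬ]
  · simp only [hC₀, he₀ℬ, if_false]
    linarith

theorem piecewise_sup (h : HallCondition 𝒞 x d) (hℬ : ℬ ⊆ 𝒞) :
    HallCondition ℬ ((ℬ.sup id).piecewise x 0) d := by
  intro ℬ' hℬ'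
  rw [sum_piecewise, inter_eq_left.2 (sup_mono hℬ'), sdiff_eq_empty_iff_subset.2 (sup_mono hℬ'),
    sum_empty, add_zero]
  exact h ℬ' (hℬ'.trans hℬ)

theorem sdiff_of_tight (h : HallCondition 𝒞 x d) (hℬ : ℬ ⊆ 𝒞)
    (htight : ∑ e ∈ ℬ.sup id, x e ≤ ∑ C ∈ ℬ, d C) :
    HallCondition (𝒞 \ ℬ) ((ℬ.sup id).piecewise 0 x) d := by
  intro 𝒜 h𝒜
  have hunion := h (𝒜 ∪ ℬ) (union_subset (h𝒜.trans sdiff_subset) hℬ)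
  rw [sum_union (disjoint_of_subset_left h𝒜 sdiff_disjoint), sup_union, sup_eq_union,
    ← sum_sdiff (subset_union_right (s₁ := 𝒜.sup id)), union_sdiff_right] at hunion
  rw [sum_piecewise, Pi.zero_def, sum_const_zero, zero_add]
  linarith

theorem exists_sub_single (h : HallCondition 𝒞 x d) {C₀ : Finset α} {e₀ : α} (he₀ : e₀ ∈ C₀)
    (hxe₀ : 0 ≤ x e₀) :
    ∃ τ, 0 ≤ τ ∧ τ ≤ x e₀ ∧ HallCondition 𝒞 (x - Pi.single e₀ τ) (d - Pi.single C₀ τ) ∧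
      (τ = x e₀ ∨ ∃ ℬ ⊆ 𝒞, C₀ ∉ ℬ ∧ e₀ ∈ ℬ.sup id ∧
        ∑ e ∈ ℬ.sup id, (x - Pi.single e₀ τ : α → ℝ) e ≤
          ∑ C ∈ ℬ, (d - Pi.single C₀ τ : Finset α → ℝ) C) := by
  set 𝔽 := 𝒞.powerset.filter fun ℬ => C₀ ∉ ℬ ∧ e₀ ∈ ℬ.sup id
  set slack : Finset (Finset α) → ℝ := fun ℬ => ∑ e ∈ ℬ.sup id, x e - ∑ C ∈ ℬ, d C
  have mem𝔽 : ∀ {ℬ}, ℬ ∈ 𝔽 ↔ ℬ ⊆ 𝒞 ∧ C₀ ∉ ℬ ∧ e₀ ∈ ℬ.sup id := by simp [𝔽]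
  by_cases hsplit : ∃ ℬ ∈ 𝔽, slack ℬ ≤ x e₀
  · obtain ⟨ℬ₁, hℬ₁, hle⟩ := hsplit
    obtain ⟨ℬ, hℬ, hmin⟩ := 𝔽.exists_min_image slack ⟨ℬ₁, hℬ₁⟩
    obtain ⟨hℬ𝒞, hC₀ℬ, he₀ℬ⟩ := mem𝔽.1 hℬ
    refine ⟨slack ℬ, sub_nonneg_of_le (h ℬ hℬ𝒞), (hmin ℬ₁ hℬ₁).trans hle,
      h.sub_single he₀ fun ℬ' h₁ h₂ h₃ => hmin ℬ' (mem𝔽.2 ⟨h₁, h₂, h₃⟩),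
      Or.inr ⟨ℬ, hℬ𝒞, hC₀ℬ, he₀ℬ, ?_⟩⟩
    simp [sum_pi_single', he₀ℬ, hC₀ℬ, slack]
  · push Not at hsplit
    exact ⟨x e₀, hxe₀, le_rfl, h.sub_single he₀ fun ℬ h₁ h₂ h₃ =>
      (hsplit ℬ (mem𝔽.2 ⟨h₁, h₂, h₃⟩)).le, Or.inl rfl⟩

theorem exists_isFractionalAssignment [Fintype α] (h : HallCondition 𝒞 x d) (hx : 0 ≤ x) :
    ∃ f, IsFractionalAssignment 𝒞 x d f := by
  induction hn : #𝒞 + #{e | 0 < x e} using Nat.strong_induction_on generalizing 𝒞 x d with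
  | _ n ih =>
  by_cases hzero : ∀ C ∈ 𝒞, ∀ e ∈ C, x e = 0
  · exact ⟨0, h.isFractionalAssignment_zero hx hzero⟩
  push Not at hzero
  obtain ⟨C₀, hC₀, e₀, he₀, hxe₀⟩ := hzero
  replace hxe₀ : 0 < x e₀ := (hx e₀).lt_of_ne' hxe₀
  obtain ⟨τ, hτ, hτx, h', hcase⟩ := h.exists_sub_single he₀ hxe₀.le
  set x' := x - Pi.single e₀ τ
  have hx' : 0 ≤ x' := sub_single_nonneg hx hτx
  have hx'x : x' ≤ x := sub_le_self _ (Pi.single_nonneg.2 hτ)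
  suffices ∃ g, IsFractionalAssignment 𝒞 x' (d - Pi.single C₀ τ) g by
    obtain ⟨g, hg⟩ := this
    exact ⟨_, hg.of_sub_single hC₀ he₀ hτ⟩
  rcases hcase with rfl | ⟨ℬ, hℬ𝒞, hC₀ℬ, he₀ℬ, htight⟩
  · exact ih _ (hn ▸ Nat.add_lt_add_left (card_filter_pos_lt_of_le hx'x (by simp [x']) hxe₀) _)
      h' hx' rfl
  obtain ⟨g₁, hg₁⟩ := ih _ (hn ▸ Nat.add_lt_add_of_lt_of_le
      (card_lt_card ((ssubset_iff_of_subset hℬ𝒞).2 ⟨C₀, hC₀, hC₀ℬ⟩))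
      (card_filter_pos_le_of_le (piecewise_le_of_le_of_le _ hx'x hx)))
    (h'.piecewise_sup hℬ𝒞) (le_piecewise_of_le_of_le _ hx' le_rfl) rfl
  obtain ⟨g₂, hg₂⟩ := ih _ (hn ▸ Nat.add_lt_add_of_le_of_lt (card_le_card sdiff_subset)
      (card_filter_pos_lt_of_le (piecewise_le_of_le_of_le _ hx hx'x)
        (piecewise_eq_of_mem _ _ _ he₀ℬ).le hxe₀))
    (h'.sdiff_of_tight hℬ𝒞 htight) (le_piecewise_of_le_of_le _ le_rfl hx') rfl
  exact ⟨_, hg₁.union_sdiff hℬ𝒞 hg₂⟩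

end HallCondition

end FractionalHall

theorem Finpartition.card_image_le_card_parts_ofSetoid_ker {α β : Type*} [Fintype α]
    [DecidableEq α] [DecidableEq β] (f : α → β) [DecidableRel (Setoid.ker f).r] :
    #(univ.image f) ≤ #(Finpartition.ofSetoid (Setoid.ker f)).parts := by
  refine card_le_card_of_injOn (fun b => univ.filter (f · = b)) ?_ ?_
  · rintro _ ha
    obtain ⟨a, -, rfl⟩ := mem_image.1 ha
    simp only [Finset.mem_coe]
    convert (Finpartition.ofSetoid (Setoid.ker f)).part_mem.2 (mem_univ a) using 1
    ext a'
    simp [Finpartition.mem_part_ofSetoid_iff_rel, Setoid.ker, eq_comm]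
  · rintro _ ha b' - hbb'
    obtain ⟨a, -, rfl⟩ := mem_image.1 (Finset.mem_coe.1 ha)
    simpa using (Finset.ext_iff.1 hbb' a).1 (by simp)

namespace MultiGraph

variable {V E : Type*} [DecidableEq V] [Fintype E] {G : MultiGraph V E}

theorem mem_cut {U : Finset V} {e : E} : e ∈ G.cut U ↔ ¬(G.fst e ∈ U ↔ G.snd e ∈ U) := by
  simp only [cut, mem_filter, mem_univ, true_and]
  tauto

theorem cut_symmDiff [DecidableEq E] (U W : Finset V) : G.cut (U ∆ W) = G.cut U ∆ G.cut W := by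
  ext e
  simp only [mem_symmDiff, mem_cut]
  tauto

theorem eq_empty_or_eq_univ_of_connectedOn [Fintype V] {P : E → Prop} (hP : G.ConnectedOn P)
    {U : Finset V} (hU : ∀ e ∈ G.cut U, ¬P e) : U = ∅ ∨ U = univ := by
  refine or_iff_not_imp_left.2 fun hne => eq_univ_of_forall fun w => ?_
  obtain ⟨u, hu⟩ := nonempty_iff_ne_empty.2 hne
  induction hP u w with
  | refl => exact hu
  | tail _ hadj ih =>
    obtain ⟨e, he, hends⟩ := hadj
    have : G.fst e ∈ U ↔ G.snd e ∈ U := not_not.1 fun hcut => hU e (mem_cut.2 hcut) he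
    rcases hends with ⟨rfl, rfl⟩ | ⟨rfl, rfl⟩ <;> tauto

theorem cut_eq_of_inter_cut_eq [Fintype V] [DecidableEq E] {S : Finset E}
    (hS : G.ConnectedOn (· ∈ S)) {U W : Finset V} (h : S ∩ G.cut U = S ∩ G.cut W) : G.cut U = G.cut W := by
  have hUW : G.cut (U ∆ W) = ∅ := by
    have hS' : ∀ e ∈ G.cut (U ∆ W), e ∉ S := by
      intro e he heS
      have hiff := Finset.ext_iff.1 h e
      simp only [mem_inter, heS, true_and] at hiff
      rw [cut_symmDiff, mem_symmDiff] at he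
      tauto
    rcases eq_empty_or_eq_univ_of_connectedOn hS hS' with h | h <;> simp [h, cut]
  rw [← symmDiff_symmDiff_cancel_left U W, cut_symmDiff, hUW]
  exact (symmDiff_bot (G.cut U)).symm

theorem exists_finpartition_of_inter_card_eq_one [Fintype V] [Nonempty V] [DecidableEq E]
    {S : Finset E} (hS : G.ConnectedOn (· ∈ S)) {ℬ : Finset (Finset E)}
    (hℬ : ∀ C ∈ ℬ, G.IsCut C ∧ #(S ∩ C) = 1) :
    ∃ W : Finpartition (univ : Finset V), #ℬ + 1 ≤ #W.parts ∧ G.partitionCut W ⊆ ℬ.sup id := by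
  choose! U hU using fun C hC => (hℬ C hC).1
  let σ : V → Finset (Finset E) := fun v => ℬ.filter (v ∈ U ·)
  have mem_σ_symmDiff : ∀ g C, C ∈ σ (G.fst g) ∆ σ (G.snd g) ↔ C ∈ ℬ ∧ g ∈ C := by
    intro g C
    by_cases hC : C ∈ ℬ
    · have hgC : g ∈ C ↔ ¬(G.fst g ∈ U C ↔ G.snd g ∈ U C) := by
        conv_lhs => rw [(hU C hC).2.2]
        exact mem_cut
      simp only [σ, mem_symmDiff, mem_filter, hC, true_and, hgC]
      tauto
    · simp [σ, mem_symmDiff, hC]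
  have hsep : ∀ C ∈ ℬ, ∃ a b, σ a ∆ σ b = {C} := by
    intro C hC
    obtain ⟨g, hg⟩ := card_eq_one.1 (hℬ C hC).2
    have hgC : g ∈ S ∩ C := hg ▸ mem_singleton_self g
    refine ⟨G.fst g, G.snd g, ext fun C' => ?_⟩
    rw [mem_σ_symmDiff, mem_singleton]
    refine ⟨fun ⟨hC'ℬ, hgC'⟩ => ?_, by rintro rfl; exact ⟨hC, (mem_inter.1 hgC).2⟩⟩
    obtain ⟨g', hg'⟩ := card_eq_one.1 (hℬ C' hC'ℬ).2
    have hgg' : g = g' := by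
      have hgSC' : g ∈ S ∩ C' := mem_inter.2 ⟨(mem_inter.1 hgC).1, hgC'⟩
      rwa [hg', mem_singleton] at hgSC'
    have hS' : S ∩ C' = S ∩ C := by rw [hg, hg', hgg']
    calc C' = G.cut (U C') := (hU C' hC'ℬ).2.2
      _ = G.cut (U C) :=
        cut_eq_of_inter_cut_eq hS (by rwa [← (hU C' hC'ℬ).2.2, ← (hU C hC).2.2])
      _ = C := (hU C hC).2.2.symm
  refine ⟨Finpartition.ofSetoid (Setoid.ker σ), ?_, ?_⟩
  · calc #ℬ + 1 ≤ #(univ.image σ) :=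
          card_add_one_le_of_forall_exists_symmDiff_eq_singleton (univ_nonempty.image σ)
            fun C hC => let ⟨a, b, hab⟩ := hsep C hC
              ⟨_, mem_image_of_mem σ (mem_univ a), _, mem_image_of_mem σ (mem_univ b), hab⟩
      _ ≤ _ := Finpartition.card_image_le_card_parts_ofSetoid_ker σ
  · intro g hg
    simp only [partitionCut, mem_filter, mem_univ, true_and] at hg
    have hne : σ (G.fst g) ≠ σ (G.snd g) := fun heq =>
      hg _ ((Finpartition.ofSetoid (Setoid.ker σ)).part_mem.2 (mem_univ (G.fst g)))
        ⟨Finpartition.mem_part_ofSetoid_iff_rel.2 rfl, Finpartition.mem_part_ofSetoid_iff_rel.2 heq⟩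
    obtain ⟨C, hC⟩ := symmDiff_nonempty.2 hne
    exact mem_sup.2 ⟨C, (mem_σ_symmDiff g C).1 hC⟩

end MultiGraph

namespace MultiGraph

variable {V E : Type*} [Fintype V] [DecidableEq V] [Fintype E] [DecidableEq E]

theorem hallCondition_lonelyCuts {G : MultiGraph V E} {T : Finset V} {x : E → ℝ}
    (hx : G.LPFeasible T x) {S : Finset E} (hS : G.ConnectedOn (· ∈ S)) :
    HallCondition (G.lonelyCuts x S) x 1 := by
  intro ℬ hℬ
  rcases ℬ.eq_empty_or_nonempty with rfl | ⟨C, hC⟩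
  · simp
  have hℬ' : ∀ C ∈ ℬ, G.IsCut C ∧ #(S ∩ C) = 1 := fun C hC => by
    obtain ⟨⟨hcut, -⟩, hone⟩ := (mem_filter.1 (hℬ hC)).2
    exact ⟨hcut, hone⟩
  obtain ⟨U, ⟨v, -⟩, -⟩ := (hℬ' C hC).1
  have : Nonempty V := ⟨v⟩
  obtain ⟨W, hcard, hsub⟩ := exists_finpartition_of_inter_card_eq_one hS hℬ'
  calc ∑ C ∈ ℬ, (1 : Finset E → ℝ) C = #ℬ := by simp
    _ ≤ #W.parts - 1 := by
      rw [le_sub_iff_add_le]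
      exact_mod_cast hcard
    _ ≤ ∑ e ∈ G.partitionCut W, x e := hx.2.2 W
    _ ≤ ∑ e ∈ ℬ.sup id, x e := sum_le_sum_of_subset_of_nonneg hsub fun e _ _ => hx.1 e

theorem fractional_assignment_exists_general (G : MultiGraph V E)
    (T : Finset V) (x : E → ℝ) (hx : G.LPFeasible T x)
    (S : Finset E) (hS : G.IsSpanningTree S) :
    ∃ f : E → Finset E → ℝ,
      (∀ e C, 0 ≤ f e C) ∧
      (∀ e, ∑ C ∈ (G.lonelyCuts x S).filter (fun C => e ∈ C), f e C ≤ x e) ∧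
      (∀ C ∈ G.lonelyCuts x S, 1 ≤ ∑ e ∈ C, f e C) := by
  obtain ⟨f, hf⟩ := (hallCondition_lonelyCuts hx hS.1).exists_isFractionalAssignment hx.1
  exact ⟨f, hf.nonneg, hf.sum_le_supply, hf.demand_le_sum⟩

/-- For every spanning tree `S` there is a function
`f : {(e,C) : e ∈ C, C ∈ ℒ_S} → ℝ≥0` with `Σ_{C ∈ ℒ_S : e ∈ C} f(e,C) ≤ x*_e` for
every edge `e` and `Σ_{e ∈ C} f(e,C) ≥ 1` for every `C ∈ ℒ_S`. -/
theorem fractional_assignment_exists (G : MultiGraph V E) (hG : G.Connected)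
    (T : Finset V) (hT : Even T.card) (x : E → ℝ) (hx : G.LPFeasible T x)
    (S : Finset E) (hS : G.IsSpanningTree S) :
    ∃ f : E → Finset E → ℝ,
      (∀ e C, 0 ≤ f e C) ∧
      (∀ e, ∑ C ∈ (G.lonelyCuts x S).filter (fun C => e ∈ C), f e C ≤ x e) ∧
      (∀ C ∈ G.lonelyCuts x S, 1 ≤ ∑ e ∈ C, f e C) :=
  fractional_assignment_exists_general G T x hx S hS

end MultiGraph
end

section
/- Let S be the edge set of a spanning tree of G and F_S := S \ L_S. Define ȳ^S := (2/5)·x* + (1/5)·χ^S + (1/5)·χ^{I_S \ L_S} + Σ_{C∈ℒ_S} (2/5)·(2 − x*(C))·χ^{S∩C}. Then ȳ^S(C) ≥ 1 for every (odd(F_S) △ T)-cut C, i.e., ȳ^S lies in the (odd(F_S) △ T)-join polyhedron {y ∈ ℝ^E_{≥0} : y(δ(U)) ≥ 1 for every U with |U ∩ (odd(F_S) △ T)| odd}. -/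
open Finset
open scoped Classical symmDiff

namespace MultiGraph

variable {V E : Type*} [Fintype V] [DecidableEq V] [Fintype E] [DecidableEq E]

lemma zmod_cast_ite' (n : ℕ) : ((n : ZMod 2)) = if Odd n then 1 else 0 := by
  rw [← ZMod.natCast_mod]
  rcases Nat.even_or_odd n with h | h
  · rw [Nat.even_iff.mp h, if_neg (by simpa [Nat.odd_iff] using Nat.even_iff.mp h)]; rfl
  · rw [Nat.odd_iff.mp h, if_pos h]; rfl

lemma odd_iff_zmod' (n : ℕ) : Odd n ↔ (n : ZMod 2) = 1 := by
  rw [zmod_cast_ite']; by_cases h : Odd n <;> simp [h]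

lemma even_iff_zmod' (n : ℕ) : Even n ↔ (n : ZMod 2) = 0 := by
  rw [Nat.not_odd_iff_even.symm, zmod_cast_ite']; by_cases h : Odd n <;> simp [h]

lemma card_symmDiff_zmod' {α : Type*} [DecidableEq α] (A B : Finset α) :
    (((A ∆ B).card : ZMod 2)) = A.card + B.card := by
  have h1 : (A ∆ B).card = (A \ B).card + (B \ A).card := by
    rw [symmDiff_def, Finset.sup_eq_union]
    exact Finset.card_union_of_disjoint (disjoint_sdiff_sdiff)
  have h2 : (A \ B).card + (A ∩ B).card = A.card := Finset.card_sdiff_add_card_inter A B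
  have h3 : (B \ A).card + (B ∩ A).card = B.card := Finset.card_sdiff_add_card_inter B A
  have h4 : (A ∩ B).card = (B ∩ A).card := by rw [Finset.inter_comm]
  have h5 : (A ∆ B).card + 2 * (A ∩ B).card = A.card + B.card := by omega
  have h6 := congrArg (fun n : ℕ => (n : ZMod 2)) h5
  push_cast at h6
  rw [show ((2 : ZMod 2)) = 0 by rfl] at h6
  rw [← h6]; ring

lemma parity_zmod (G : MultiGraph V E) (F : Finset E) (U : Finset V) :
    (((F ∩ G.cut U).card : ZMod 2)) = ((U ∩ G.oddVerts F.val).card : ZMod 2) := by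
  have lhs : ((F ∩ G.cut U).card : ZMod 2) = ∑ e ∈ F, (if e ∈ G.cut U then (1 : ZMod 2) else 0) := by
    rw [← Finset.filter_mem_eq_inter, Finset.card_filter]
    push_cast
    rfl
  have hU : U ∩ G.oddVerts F.val = U.filter (fun v => Odd (G.deg F.val v)) := by
    ext v
    simp [oddVerts, Finset.mem_filter, Finset.mem_inter]
  have rhs : ((U ∩ G.oddVerts F.val).card : ZMod 2)
      = ∑ v ∈ U, ((G.deg F.val v : ℕ) : ZMod 2) := by
    rw [hU, Finset.card_filter]
    push_cast
    refine Finset.sum_congr rfl fun v _ => ?_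
    rw [zmod_cast_ite']
  have hdeg : ∀ v, G.deg F.val v
      = ∑ e ∈ F, ((if G.fst e = v then 1 else 0) + (if G.snd e = v then 1 else 0)) :=
    fun v => rfl
  rw [lhs, rhs]
  calc ∑ e ∈ F, (if e ∈ G.cut U then (1 : ZMod 2) else 0)
      = ∑ e ∈ F, ((if G.fst e ∈ U then (1 : ZMod 2) else 0) + (if G.snd e ∈ U then 1 else 0)) := by
        refine Finset.sum_congr rfl fun e _ => ?_
        by_cases h1 : G.fst e ∈ U <;> by_cases h2 : G.snd e ∈ U <;>
          simp [cut, Finset.mem_filter, h1, h2] <;> decide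
    _ = ∑ e ∈ F, ∑ v ∈ U, ((if G.fst e = v then (1 : ZMod 2) else 0) + (if G.snd e = v then 1 else 0)) := by
        refine Finset.sum_congr rfl fun e _ => ?_
        rw [Finset.sum_add_distrib, Finset.sum_ite_eq U (G.fst e) (fun _ => (1 : ZMod 2)),
          Finset.sum_ite_eq U (G.snd e) (fun _ => (1 : ZMod 2))]
    _ = ∑ v ∈ U, ∑ e ∈ F, ((if G.fst e = v then (1 : ZMod 2) else 0) + (if G.snd e = v then 1 else 0)) :=
        Finset.sum_comm
    _ = ∑ v ∈ U, ((G.deg F.val v : ℕ) : ZMod 2) := by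
        refine Finset.sum_congr rfl fun v _ => ?_
        rw [hdeg v]
        push_cast
        refine Finset.sum_congr rfl fun e _ => ?_
        by_cases h1 : G.fst e = v <;> by_cases h2 : G.snd e = v <;> simp [h1, h2]

lemma one_le_cut_sum (G : MultiGraph V E) {T : Finset V} {x : E → ℝ} (hx : G.LPFeasible T x)
    {U : Finset V} (h1 : U.Nonempty) (h2 : U ≠ univ) : 1 ≤ ∑ e ∈ G.cut U, x e := by
  have hcne : (univ \ U).Nonempty := by
    rw [Finset.sdiff_nonempty]
    intro h
    exact h2 (Finset.eq_univ_iff_forall.mpr fun v => h (Finset.mem_univ v))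
  have hne : U ≠ univ \ U := by
    obtain ⟨u, hu⟩ := h1
    intro h
    have h' := h ▸ hu
    simp only [Finset.mem_sdiff, Finset.mem_univ, true_and] at h'
    exact h' hu
  have hdisj : Disjoint (id U) (id (univ \ U)) := Finset.disjoint_sdiff
  let W : Finpartition (univ : Finset V) :=
    { parts := {U, univ \ U}
      supIndep := (Finset.supIndep_pair hne).mpr hdisj
      sup_parts := by
        rw [Finset.sup_insert, Finset.sup_singleton, id_eq, id_eq, Finset.sup_eq_union,
          Finset.union_sdiff_of_subset (Finset.subset_univ U)]
      bot_notMem := by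
        simp only [Finset.bot_eq_empty, Finset.mem_insert, Finset.mem_singleton]
        push_neg
        exact ⟨fun h => h1.ne_empty h.symm, fun h => hcne.ne_empty h.symm⟩ }
  have hparts : W.parts = {U, univ \ U} := rfl
  have hcard : W.parts.card = 2 := by
    rw [hparts, Finset.card_insert_of_notMem (by simp [hne]), Finset.card_singleton]
  have hcut : G.partitionCut W = G.cut U := by
    ext e
    simp only [partitionCut, cut, Finset.mem_filter, Finset.mem_univ, true_and, hparts]
    constructor
    · intro h
      have hU := h U (by simp)
      have hUc := h (univ \ U) (by simp)
      simp only [Finset.mem_sdiff, Finset.mem_univ, true_and] at hUc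
      by_cases hf : G.fst e ∈ U <;> by_cases hs : G.snd e ∈ U <;> tauto
    · intro h P hP
      rcases Finset.mem_insert.mp hP with rfl | hP
      · tauto
      · rw [Finset.mem_singleton] at hP; subst hP
        simp only [Finset.mem_sdiff, Finset.mem_univ, true_and]
        tauto
  have hW := hx.2.2 W
  rw [hcut, hcard] at hW
  norm_num at hW
  exact hW

lemma exists_cross (G : MultiGraph V E) {P : E → Prop} (hconn : G.ConnectedOn P)
    {U : Finset V} (h1 : U.Nonempty) (h2 : U ≠ univ) : ∃ e, P e ∧ e ∈ G.cut U := by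
  obtain ⟨u, hu⟩ := h1
  have hw : ∃ w, w ∉ U := by
    by_contra h
    push_neg at h
    exact h2 (Finset.eq_univ_iff_forall.mpr h)
  obtain ⟨w, hw⟩ := hw
  have h := hconn u w
  clear h2
  revert hw
  induction h with
  | refl => intro hw; exact absurd hu hw
  | @tail b c hub hbc ih =>
    intro hw
    by_cases hb : b ∈ U
    · obtain ⟨e, hPe, hor⟩ := hbc
      refine ⟨e, hPe, ?_⟩
      simp only [cut, Finset.mem_filter, Finset.mem_univ, true_and]
      rcases hor with ⟨hf, hs⟩ | ⟨hf, hs⟩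
      · exact Or.inl ⟨hf ▸ hb, hs ▸ hw⟩
      · exact Or.inr ⟨hf ▸ hw, hs ▸ hb⟩
    · exact ih hb

lemma sum_chi' (A B : Finset E) : ∑ e ∈ A, chi B e = ((A ∩ B).card : ℝ) := by
  rw [← Finset.filter_mem_eq_inter]
  simp only [chi]
  rw [Finset.sum_boole]

lemma lonely_subset_join (G : MultiGraph V E) {T : Finset V} {x : E → ℝ}
    (hx : G.LPFeasible T x) {S I : Finset E} (hIS : I ⊆ S) (hIT : G.oddVerts I.val = T) :
    G.lonelyEdges x S ⊆ I := by
  intro e he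
  rw [lonelyEdges, Finset.mem_filter] at he
  obtain ⟨heS, C, ⟨⟨⟨U', hU'ne, hU'univ, rfl⟩, hxlt⟩, hcard⟩, heC⟩ := he
  have hTodd : Odd ((T ∩ U').card) := by
    by_contra h
    rw [Nat.not_odd_iff_even] at h
    exact absurd (hx.2.1 U' hU'ne hU'univ h) (not_le.mpr hxlt)
  have hpar := G.parity_zmod I U'
  rw [hIT] at hpar
  have hIodd : Odd ((I ∩ G.cut U').card) := by
    rw [odd_iff_zmod', hpar, ← odd_iff_zmod']
    rwa [Finset.inter_comm]
  obtain ⟨f, hf⟩ := Finset.card_pos.mp (Nat.pos_of_ne_zero (by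
    intro h0; rw [h0] at hIodd; exact absurd (Nat.odd_iff.mp hIodd) (by omega)))
  obtain ⟨a, ha⟩ := Finset.card_eq_one.mp hcard
  have hfa : f = a := by
    have : f ∈ S ∩ G.cut U' := Finset.mem_inter.mpr
      ⟨hIS (Finset.mem_inter.mp hf).1, (Finset.mem_inter.mp hf).2⟩
    rw [ha, Finset.mem_singleton] at this
    exact this
  have hea : e = a := by
    have : e ∈ S ∩ G.cut U' := Finset.mem_inter.mpr ⟨heS, heC⟩
    rw [ha, Finset.mem_singleton] at this
    exact this
  rw [hea, ← hfa]
  exact (Finset.mem_inter.mp hf).1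

end MultiGraph

namespace MultiGraph

variable {V E : Type*} [Fintype V] [DecidableEq V] [Fintype E] [DecidableEq E]

/-- For a spanning tree `S` and `F_S := S \ L_S`, the vector
`ȳ^S = (2/5)x* + (1/5)χ^S + (1/5)χ^{I_S \ L_S} + Σ_{C ∈ ℒ_S} (2/5)(2 − x*(C))·χ^{S∩C}`
lies in the `(odd(F_S) △ T)`-join polyhedron. -/
theorem parity_correction_vector_deletion (G : MultiGraph V E) (hG : G.Connected)
    (T : Finset V) (hT : Even T.card) (x : E → ℝ) (hx : G.LPFeasible T x)
    (S : Finset E) (hS : G.IsSpanningTree S)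
    (I : Finset E) (hIS : I ⊆ S) (hIT : G.oddVerts I.val = T)
    (y : E → ℝ)
    (hy : y = fun e => (2 / 5) * x e + (1 / 5) * chi S e +
      (1 / 5) * chi (I \ G.lonelyEdges x S) e +
      ∑ C ∈ G.lonelyCuts x S, (2 / 5) * (2 - ∑ f ∈ C, x f) * chi (S ∩ C) e) :
    (∀ e, 0 ≤ y e) ∧
    (∀ U : Finset V,
      Odd ((U ∩ (G.oddVerts (S \ G.lonelyEdges x S).val ∆ T)).card) →
      1 ≤ ∑ e ∈ G.cut U, y e) := by
  set L := G.lonelyEdges x S with hLdef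
  have chi_nonneg : ∀ (F : Finset E) (e : E), (0:ℝ) ≤ chi F e := by
    intro F e
    unfold chi
    split <;> norm_num
  have hnn : ∀ C ∈ G.lonelyCuts x S, (0:ℝ) ≤ 2 - ∑ f ∈ C, x f := by
    intro C hC
    have h := ((Finset.mem_filter.mp hC).2).1.2
    linarith
  constructor
  · intro e
    rw [hy]
    have h4 : (0:ℝ) ≤ ∑ C ∈ G.lonelyCuts x S, (2/5) * (2 - ∑ f ∈ C, x f) * chi (S ∩ C) e :=
      Finset.sum_nonneg fun C hC =>
        mul_nonneg (mul_nonneg (by norm_num) (hnn C hC)) (chi_nonneg _ _)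
    have hx0 := hx.1 e
    have hc1 := chi_nonneg S e
    have hc2 := chi_nonneg (I \ L) e
    dsimp only
    linarith
  · intro U hodd
    have hUne : U.Nonempty := by
      rcases Finset.eq_empty_or_nonempty U with rfl | h
      · rw [Finset.empty_inter, Finset.card_empty] at hodd
        exact absurd hodd (by decide)
      · exact h
    have hFeven' : Even ((G.oddVerts (S \ L).val).card) := by
      have hpar := G.parity_zmod (S \ L) univ
      have hcut : G.cut univ = ∅ := by
        ext e
        simp [cut]
      rw [hcut, Finset.inter_empty, Finset.univ_inter, Finset.card_empty] at hpar
      rw [even_iff_zmod', ← hpar]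
      simp
    have hUuniv : U ≠ univ := by
      rintro rfl
      rw [Finset.univ_inter] at hodd
      have hE : Even ((G.oddVerts (S \ L).val ∆ T).card) := by
        rw [even_iff_zmod', card_symmDiff_zmod', (even_iff_zmod' _).mp hFeven',
          (even_iff_zmod' _).mp hT]
        ring
      exact (Nat.not_odd_iff_even.mpr hE) hodd
    have hsum : ∑ e ∈ G.cut U, y e =
        (2/5) * (∑ e ∈ G.cut U, x e) + (1/5) * ((G.cut U ∩ S).card : ℝ)
        + (1/5) * ((G.cut U ∩ (I \ L)).card : ℝ)
        + ∑ C ∈ G.lonelyCuts x S,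
            (2/5) * (2 - ∑ f ∈ C, x f) * ((G.cut U ∩ (S ∩ C)).card : ℝ) := by
      simp only [hy]
      rw [Finset.sum_add_distrib, Finset.sum_add_distrib, Finset.sum_add_distrib]
      congr 1
      · congr 1
        · congr 1
          · rw [← Finset.mul_sum]
          · rw [← Finset.mul_sum, sum_chi']
        · rw [← Finset.mul_sum, sum_chi']
      · rw [Finset.sum_comm]
        refine Finset.sum_congr rfl fun C hC => ?_
        rw [← Finset.mul_sum, sum_chi']
    have hx1 : 1 ≤ ∑ e ∈ G.cut U, x e := G.one_le_cut_sum hx hUne hUuniv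
    have hScross : 1 ≤ ((G.cut U ∩ S).card : ℝ) := by
      obtain ⟨e, heS, heC⟩ := G.exists_cross hS.1 hUne hUuniv
      have hm : e ∈ G.cut U ∩ S := Finset.mem_inter.mpr ⟨heC, heS⟩
      exact_mod_cast Finset.card_pos.mpr ⟨e, hm⟩
    have hlast0 : (0:ℝ) ≤ ∑ C ∈ G.lonelyCuts x S,
        (2/5) * (2 - ∑ f ∈ C, x f) * ((G.cut U ∩ (S ∩ C)).card : ℝ) :=
      Finset.sum_nonneg fun C hC =>
        mul_nonneg (mul_nonneg (by norm_num) (hnn C hC)) (Nat.cast_nonneg _)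
    have hI0 : (0:ℝ) ≤ ((G.cut U ∩ (I \ L)).card : ℝ) := Nat.cast_nonneg _
    rw [hsum]
    by_cases hbig : 2 ≤ ∑ e ∈ G.cut U, x e
    · linarith
    push_neg at hbig
    have hTodd : Odd ((T ∩ U).card) := by
      by_contra h
      rw [Nat.not_odd_iff_even] at h
      exact absurd (hx.2.1 U hUne hUuniv h) (not_le.mpr hbig)
    have hIodd : Odd ((I ∩ G.cut U).card) := by
      have hpar := G.parity_zmod I U
      rw [hIT] at hpar
      rw [odd_iff_zmod', hpar, ← odd_iff_zmod', Finset.inter_comm]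
      exact hTodd
    have hFeven : Even (((S \ L) ∩ G.cut U).card) := by
      have hpar := G.parity_zmod (S \ L) U
      rw [even_iff_zmod', hpar]
      have h1 : ((U ∩ (G.oddVerts (S \ L).val ∆ T)).card : ZMod 2) = 1 :=
        (odd_iff_zmod' _).mp hodd
      have hdist : U ∩ (G.oddVerts (S \ L).val ∆ T)
          = (U ∩ G.oddVerts (S \ L).val) ∆ (U ∩ T) :=
        inf_symmDiff_distrib_left U _ T
      rw [hdist, card_symmDiff_zmod'] at h1
      have h2 : ((U ∩ T).card : ZMod 2) = 1 := by
        rw [← odd_iff_zmod', Finset.inter_comm]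
        exact hTodd
      rw [h2] at h1
      linear_combination h1
    rcases Nat.lt_or_ge ((G.cut U ∩ S).card) 2 with hk | hk
    · -- |S ∩ C| = 1 : lonely cut
      have hk1 : (G.cut U ∩ S).card = 1 := by
        have h1 : 1 ≤ (G.cut U ∩ S).card := by exact_mod_cast hScross
        omega
      have hCmem : G.cut U ∈ G.lonelyCuts x S := by
        rw [lonelyCuts, Finset.mem_filter]
        exact ⟨Finset.mem_univ _, ⟨⟨U, hUne, hUuniv, rfl⟩, hbig⟩, by rwa [Finset.inter_comm]⟩
      have hinter : G.cut U ∩ (S ∩ G.cut U) = G.cut U ∩ S := by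
        ext e
        simp only [Finset.mem_inter]
        tauto
      have hsingle : (2/5) * (2 - ∑ f ∈ G.cut U, x f) * ((G.cut U ∩ (S ∩ G.cut U)).card : ℝ)
          ≤ ∑ C ∈ G.lonelyCuts x S,
              (2/5) * (2 - ∑ f ∈ C, x f) * ((G.cut U ∩ (S ∩ C)).card : ℝ) :=
        Finset.single_le_sum
          (f := fun C => (2/5) * (2 - ∑ f ∈ C, x f) * ((G.cut U ∩ (S ∩ C)).card : ℝ))
          (fun C hC =>
          mul_nonneg (mul_nonneg (by norm_num) (hnn C hC)) (Nat.cast_nonneg _)) hCmem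
      rw [hinter, hk1] at hsingle
      rw [hk1]
      push_cast at hsingle ⊢
      linarith
    · rcases Nat.lt_or_ge ((G.cut U ∩ S).card) 3 with hk3 | hk3
      · -- |S ∩ C| = 2
        have hk2 : (G.cut U ∩ S).card = 2 := by omega
        have hk2' : (S ∩ G.cut U).card = 2 := by rw [Finset.inter_comm]; exact hk2
        have hIsub : I ∩ G.cut U ⊆ S ∩ G.cut U := by
          intro e he
          rw [Finset.mem_inter] at he ⊢
          exact ⟨hIS he.1, he.2⟩
        have hIcard : (I ∩ G.cut U).card = 1 := by
          have hle : (I ∩ G.cut U).card ≤ 2 := hk2' ▸ Finset.card_le_card hIsub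
          have hoddc := Nat.odd_iff.mp hIodd
          omega
        have hLI : L ⊆ I := G.lonely_subset_join hx hIS hIT
        have hFC : (S \ L) ∩ G.cut U = (S ∩ G.cut U) \ L := by
          ext e
          simp only [Finset.mem_inter, Finset.mem_sdiff]
          tauto
        have hcases : ((S ∩ G.cut U) \ L).card = 0 ∨ ((S ∩ G.cut U) \ L).card = 2 := by
          have hle : ((S ∩ G.cut U) \ L).card ≤ 2 :=
            hk2' ▸ Finset.card_le_card (Finset.sdiff_subset)
          have hev := hFeven
          rw [hFC] at hev
          rw [Nat.even_iff] at hev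
          omega
        rcases hcases with h0 | h2
        · exfalso
          have hsub : S ∩ G.cut U ⊆ L := by
            intro e he
            by_contra hel
            have hm : e ∈ (S ∩ G.cut U) \ L := Finset.mem_sdiff.mpr ⟨he, hel⟩
            rw [Finset.card_eq_zero.mp h0] at hm
            exact absurd hm (Finset.notMem_empty e)
          have hsub2 : S ∩ G.cut U ⊆ I ∩ G.cut U := by
            intro e he
            exact Finset.mem_inter.mpr ⟨hLI (hsub he), (Finset.mem_inter.mp he).2⟩
          have := Finset.card_le_card hsub2
          omega
        · have hAA : (S ∩ G.cut U) \ L = S ∩ G.cut U :=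
            Finset.eq_of_subset_of_card_le (Finset.sdiff_subset) (by omega)
          obtain ⟨e0, he0⟩ := Finset.card_eq_one.mp hIcard
          have he0m : e0 ∈ I ∩ G.cut U := by
            rw [he0]
            exact Finset.mem_singleton_self e0
          have he0S : e0 ∈ S ∩ G.cut U := hIsub he0m
          have he0L : e0 ∉ L := by
            intro h
            rw [← hAA] at he0S
            exact (Finset.mem_sdiff.mp he0S).2 h
          have he0fin : e0 ∈ G.cut U ∩ (I \ L) := Finset.mem_inter.mpr
            ⟨(Finset.mem_inter.mp he0m).2,
             Finset.mem_sdiff.mpr ⟨(Finset.mem_inter.mp he0m).1, he0L⟩⟩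
          have h1I : 1 ≤ ((G.cut U ∩ (I \ L)).card : ℝ) := by
            exact_mod_cast Finset.card_pos.mpr ⟨e0, he0fin⟩
          have hk2r : ((G.cut U ∩ S).card : ℝ) = 2 := by exact_mod_cast hk2
          linarith
      · have hk3r : (3:ℝ) ≤ ((G.cut U ∩ S).card : ℝ) := by exact_mod_cast hk3
        linarith

end MultiGraph
end
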